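/- arXiv:1904.01967 — 7 statements merged into one kernel-verified Lean document; each statement's English description precedes it below -/
import Mathlib

section
/- A matrix H ∈ ℂ^{n×n} is pseudo-Hermitian if and only if H is similar to its entrywise complex conjugate conj(H); that is, there exists a nonsingular Hermitian matrix G ∈ ℂ^{n×n} with Hᴴ G = G H if and only if there exists an invertible matrix Q ∈ ℂ^{n×n} such that conj(H) = Q⁻¹ H Q. -/
open Polynomial Module Matrix

noncomputable section

noncomputable def betaP (q : ℂ[X]) : ℂ[X] →ₗ[ℂ] ℂ[X] →ₗ[ℂ] ℂ :=
  (LinearMap.mul ℂ ℂ[X]).compr₂ ((lcoeff ℂ (q.natDegree - 1)).comp (modByMonicHom q))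

lemma betaP_apply (q a b : ℂ[X]) : betaP q a b = ((a * b) %ₘ q).coeff (q.natDegree - 1) := rfl

lemma betaP_eq_zero_left {q a : ℂ[X]} (hq : q.Monic) (h : q ∣ a) (b : ℂ[X]) :
    betaP q a b = 0 := by
  rw [betaP_apply, (modByMonic_eq_zero_iff_dvd hq).2 (h.mul_right b), coeff_zero]

lemma betaP_comm (q a b : ℂ[X]) : betaP q a b = betaP q b a := by
  simp [betaP_apply, mul_comm]

lemma betaP_eq_zero_right {q b : ℂ[X]} (hq : q.Monic) (h : q ∣ b) (a : ℂ[X]) :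
    betaP q a b = 0 := by rw [betaP_comm]; exact betaP_eq_zero_left hq h a

lemma betaP_X_mul (q a b : ℂ[X]) : betaP q (X * a) b = betaP q a (X * b) := by
  rw [betaP_apply, betaP_apply]; ring_nf

lemma betaP_mod_left {q : ℂ[X]} (hq : q.Monic) (a b : ℂ[X]) :
    betaP q (a %ₘ q) b = betaP q a b := by
  have : a %ₘ q = a - q * (a /ₘ q) := by
    rw [modByMonic_eq_sub_mul_div]
  rw [this, map_sub, LinearMap.sub_apply, betaP_eq_zero_left hq (Dvd.intro _ rfl), sub_zero]

lemma betaP_nondeg {q a : ℂ[X]} (hq : q.Monic) (h : ¬ q ∣ a) :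
    ∃ m : ℕ, betaP q a (X ^ m) ≠ 0 := by
  have hd : q.natDegree ≠ 0 := by
    intro h0
    exact h (by simp [hq.natDegree_eq_zero.1 h0])
  set d := q.natDegree with hdd
  set r := a %ₘ q with hr
  have hr0 : r ≠ 0 := fun h0 => h ((modByMonic_eq_zero_iff_dvd hq).1 h0)
  have hrd : r.natDegree < d := natDegree_lt_natDegree hr0 (degree_modByMonic_lt a hq)
  set k := r.natDegree with hk
  refine ⟨d - 1 - k, ?_⟩
  rw [← betaP_mod_left hq, betaP_apply, ← hr]
  have hdeg : (r * X ^ (d - 1 - k)).degree < q.degree := by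
    have h1 : (r * X ^ (d - 1 - k)).natDegree = k + (d - 1 - k) := by
      rw [natDegree_mul hr0 (pow_ne_zero _ X_ne_zero), natDegree_X_pow]
    have h2 : (r * X ^ (d - 1 - k)).natDegree < d := by
      rw [h1]
      omega
    calc (r * X ^ (d - 1 - k)).degree ≤ ((r * X ^ (d - 1 - k)).natDegree : WithBot ℕ) :=
          degree_le_natDegree
      _ < (d : WithBot ℕ) := by exact_mod_cast h2
      _ = q.degree := (degree_eq_natDegree hq.ne_zero).symm
  rw [(modByMonic_eq_self_iff hq).2 hdeg, coeff_mul_X_pow']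
  have hle : d - 1 - (d - 1 - k) = k := Nat.sub_sub_self (Nat.le_sub_one_of_lt hrd)
  rw [if_pos (Nat.sub_le _ _), hle]
  exact mt leadingCoeff_eq_zero.1 hr0

/-! ### Pairing on the quotient `ℂ[X] ⧸ (q)` -/

noncomputable def repQ {q : ℂ[X]} (hq : q.Monic) : (ℂ[X] ⧸ (ℂ[X] ∙ q)) →ₗ[ℂ] ℂ[X] :=
  (Submodule.liftQ ((ℂ[X] ∙ q).restrictScalars ℂ) (modByMonicHom q) (by
    intro x hx
    rw [Submodule.restrictScalars_mem, Submodule.mem_span_singleton] at hx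
    obtain ⟨c, rfl⟩ := hx
    simp only [LinearMap.mem_ker, modByMonicHom_apply, smul_eq_mul]
    exact (modByMonic_eq_zero_iff_dvd hq).2 (dvd_mul_left q c))) ∘ₗ
    (Submodule.Quotient.restrictScalarsEquiv ℂ (ℂ[X] ∙ q)).symm.toLinearMap

lemma repQ_mk {q : ℂ[X]} (hq : q.Monic) (p : ℂ[X]) :
    repQ hq (Submodule.Quotient.mk p) = p %ₘ q := rfl

noncomputable def BQ {q : ℂ[X]} (hq : q.Monic) :
    (ℂ[X] ⧸ (ℂ[X] ∙ q)) →ₗ[ℂ] (ℂ[X] ⧸ (ℂ[X] ∙ q)) →ₗ[ℂ] ℂ :=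
  (betaP q).compl₁₂ (repQ hq) (repQ hq)

lemma BQ_mk {q : ℂ[X]} (hq : q.Monic) (a b : ℂ[X]) :
    BQ hq (Submodule.Quotient.mk a) (Submodule.Quotient.mk b) = betaP q a b := by
  simp only [BQ, LinearMap.compl₁₂_apply, repQ_mk]
  rw [betaP_mod_left hq, betaP_comm, betaP_mod_left hq, betaP_comm]

lemma BQ_balanced {q : ℂ[X]} (hq : q.Monic) (x y : ℂ[X] ⧸ (ℂ[X] ∙ q)) :
    BQ hq ((X : ℂ[X]) • x) y = BQ hq x ((X : ℂ[X]) • y) := by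
  obtain ⟨a, rfl⟩ := Submodule.Quotient.mk_surjective _ x
  obtain ⟨b, rfl⟩ := Submodule.Quotient.mk_surjective _ y
  rw [← Submodule.Quotient.mk_smul, ← Submodule.Quotient.mk_smul, smul_eq_mul, smul_eq_mul,
    BQ_mk, BQ_mk, betaP_X_mul]

lemma BQ_nondeg_left {q : ℂ[X]} (hq : q.Monic) (x : ℂ[X] ⧸ (ℂ[X] ∙ q)) (hx : x ≠ 0) :
    ∃ y, BQ hq x y ≠ 0 := by
  obtain ⟨a, rfl⟩ := Submodule.Quotient.mk_surjective _ x
  have ha : ¬ q ∣ a := by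
    rintro ⟨c, rfl⟩
    exact hx (by
      rw [Submodule.Quotient.mk_eq_zero]
      exact Submodule.mem_span_singleton.2 ⟨c, by rw [smul_eq_mul, mul_comm]⟩)
  obtain ⟨m, hm⟩ := betaP_nondeg hq ha
  exact ⟨Submodule.Quotient.mk (X ^ m), by rwa [BQ_mk]⟩

lemma BQ_comm {q : ℂ[X]} (hq : q.Monic) (x y : ℂ[X] ⧸ (ℂ[X] ∙ q)) :
    BQ hq x y = BQ hq y x := by
  obtain ⟨a, rfl⟩ := Submodule.Quotient.mk_surjective _ x
  obtain ⟨b, rfl⟩ := Submodule.Quotient.mk_surjective _ y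
  rw [BQ_mk, BQ_mk, betaP_comm]

lemma BQ_nondeg_right {q : ℂ[X]} (hq : q.Monic) (y : ℂ[X] ⧸ (ℂ[X] ∙ q)) (hy : y ≠ 0) :
    ∃ x, BQ hq x y ≠ 0 := by
  obtain ⟨x, hx⟩ := BQ_nondeg_left hq y hy
  exact ⟨x, by rwa [BQ_comm]⟩

/-! ### Pairing on a finite direct sum -/

section DS

open scoped DirectSum
set_option linter.unusedSectionVars false

variable {ι : Type*} [DecidableEq ι] {Q : ι → Type*}
  [∀ i, AddCommGroup (Q i)] [∀ i, Module ℂ[X] (Q i)] [∀ i, Module ℂ (Q i)]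
  [∀ i, IsScalarTower ℂ ℂ[X] (Q i)]

noncomputable def BDS (B : ∀ i, Q i →ₗ[ℂ] Q i →ₗ[ℂ] ℂ) :
    (⨁ i, Q i) →ₗ[ℂ] (⨁ i, Q i) →ₗ[ℂ] ℂ :=
  DirectSum.toModule ℂ ι _ (fun i => (B i).compl₂ (DirectSum.component ℂ ι Q i))

lemma BDS_of_apply (B : ∀ i, Q i →ₗ[ℂ] Q i →ₗ[ℂ] ℂ) (i : ι) (a : Q i) (w : ⨁ i, Q i) :
    BDS B (DirectSum.of Q i a) w = B i a (w i) := by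
  rw [← DirectSum.lof_eq_of ℂ]
  have := DirectSum.toModule_lof (R := ℂ) (ι := ι)
    (φ := fun i => (B i).compl₂ (DirectSum.component ℂ ι Q i)) i a
  rw [BDS, this]
  rfl

lemma BDS_apply_of (B : ∀ i, Q i →ₗ[ℂ] Q i →ₗ[ℂ] ℂ) (i : ι) (b : Q i) (w : ⨁ i, Q i) :
    BDS B w (DirectSum.of Q i b) = B i (w i) b := by
  induction w using DirectSum.induction_on with
  | zero => simp
  | of j a =>
    rw [BDS_of_apply]
    by_cases h : j = i
    · subst h
      simp [DirectSum.of_eq_same]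
    · rw [DirectSum.of_eq_of_ne _ _ _ h, DirectSum.of_eq_of_ne _ _ _ (Ne.symm h)]
      simp
  | add x y hx hy =>
    rw [map_add, LinearMap.add_apply, hx, hy, DirectSum.add_apply, map_add,
      LinearMap.add_apply]

lemma BDS_balanced (B : ∀ i, Q i →ₗ[ℂ] Q i →ₗ[ℂ] ℂ)
    (hB : ∀ i a b, B i ((X : ℂ[X]) • a) b = B i a ((X : ℂ[X]) • b))
    (w w' : ⨁ i, Q i) :
    BDS B ((X : ℂ[X]) • w) w' = BDS B w ((X : ℂ[X]) • w') := by
  induction w using DirectSum.induction_on with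
  | zero => simp
  | of j a =>
    have h1 : (X : ℂ[X]) • DirectSum.of Q j a = DirectSum.of Q j ((X : ℂ[X]) • a) := by
      rw [← DirectSum.lof_eq_of ℂ[X], ← _root_.map_smul, DirectSum.lof_eq_of]
    rw [h1, BDS_of_apply, BDS_of_apply, hB]
    congr 1
  | add x y hx hy =>
    rw [smul_add, map_add, map_add, LinearMap.add_apply, LinearMap.add_apply, hx, hy]

lemma BDS_nondeg_left (B : ∀ i, Q i →ₗ[ℂ] Q i →ₗ[ℂ] ℂ)
    (hB : ∀ i (a : Q i), a ≠ 0 → ∃ b, B i a b ≠ 0)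
    (w : ⨁ i, Q i) (hw : w ≠ 0) : ∃ w', BDS B w w' ≠ 0 := by
  have : ∃ i, w i ≠ 0 := by
    by_contra h
    push_neg at h
    exact hw (DFinsupp.ext h)
  obtain ⟨i, hi⟩ := this
  obtain ⟨b, hb⟩ := hB i (w i) hi
  exact ⟨DirectSum.of Q i b, by rwa [BDS_apply_of]⟩

lemma BDS_nondeg_right (B : ∀ i, Q i →ₗ[ℂ] Q i →ₗ[ℂ] ℂ)
    (hB : ∀ i (b : Q i), b ≠ 0 → ∃ a, B i a b ≠ 0)
    (w' : ⨁ i, Q i) (hw : w' ≠ 0) : ∃ w, BDS B w w' ≠ 0 := by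
  have : ∃ i, w' i ≠ 0 := by
    by_contra h
    push_neg at h
    exact hw (DFinsupp.ext h)
  obtain ⟨i, hi⟩ := this
  obtain ⟨a, ha⟩ := hB i (w' i) hi
  exact ⟨DirectSum.of Q i a, by rwa [BDS_of_apply]⟩

end DS

/-! ### Pairing for arbitrary nonzero `q` -/

lemma exists_pairing_span (q : ℂ[X]) (hq : q ≠ 0) :
    ∃ B : (ℂ[X] ⧸ (ℂ[X] ∙ q)) →ₗ[ℂ] (ℂ[X] ⧸ (ℂ[X] ∙ q)) →ₗ[ℂ] ℂ,
      (∀ x y, B ((X : ℂ[X]) • x) y = B x ((X : ℂ[X]) • y)) ∧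
      (∀ x, x ≠ 0 → ∃ y, B x y ≠ 0) ∧ (∀ y, y ≠ 0 → ∃ x, B x y ≠ 0) := by
  set q' := q * C q.leadingCoeff⁻¹ with hq'
  have hmon : q'.Monic := monic_mul_leadingCoeff_inv hq
  have hu : IsUnit (C q.leadingCoeff⁻¹) :=
    Polynomial.isUnit_C.2 (isUnit_iff_ne_zero.2 (inv_ne_zero (leadingCoeff_ne_zero.2 hq)))
  have hassoc : Associated q q' := ⟨hu.unit, by rw [IsUnit.unit_spec]⟩
  have hspan : (ℂ[X] ∙ q) = (ℂ[X] ∙ q') := by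
    show Ideal.span {q} = Ideal.span {q'}
    exact Ideal.span_singleton_eq_span_singleton.2 hassoc
  rw [hspan]
  exact ⟨BQ hmon, BQ_balanced hmon, BQ_nondeg_left hmon, BQ_nondeg_right hmon⟩

/-! ### A balanced nondegenerate pairing for any endomorphism -/

open scoped DirectSum in
lemma exists_balanced_pairing {n : ℕ} (A : Matrix (Fin n) (Fin n) ℂ) :
    ∃ B : (Fin n → ℂ) →ₗ[ℂ] (Fin n → ℂ) →ₗ[ℂ] ℂ,
      (∀ v w, B (A.mulVec v) w = B v (A.mulVec w)) ∧
      (∀ v, v ≠ 0 → ∃ w, B v w ≠ 0) ∧ (∀ w, w ≠ 0 → ∃ v, B v w ≠ 0) := by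
  classical
  set f := A.mulVecLin with hf
  have tors : Module.IsTorsion ℂ[X] (Module.AEval' f) :=
    Module.AEval.isTorsion_of_finiteDimensional ℂ (Fin n → ℂ) f
  obtain ⟨ι, hfin, p, hp, e, ⟨l⟩⟩ := Module.equiv_directSum_of_isTorsion tors
  have hq : ∀ i, p i ^ e i ≠ 0 := fun i => pow_ne_zero _ (hp i).ne_zero
  choose B hbal hndl hndr using fun i => exists_pairing_span (p i ^ e i) (hq i)
  set W := ⨁ i : ι, (ℂ[X] ⧸ (ℂ[X] ∙ p i ^ e i)) with hW
  set g : (Fin n → ℂ) →ₗ[ℂ] W :=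
    (l.restrictScalars ℂ).toLinearMap ∘ₗ (Module.AEval.of ℂ (Fin n → ℂ) f).toLinearMap with hg
  have hginj : Function.Injective g := by
    simp only [hg, LinearMap.coe_comp, LinearEquiv.coe_coe]
    exact (l.restrictScalars ℂ).injective.comp (Module.AEval.of ℂ (Fin n → ℂ) f).injective
  have hgsurj : Function.Surjective g := by
    simp only [hg, LinearMap.coe_comp, LinearEquiv.coe_coe]
    exact (l.restrictScalars ℂ).surjective.comp (Module.AEval.of ℂ (Fin n → ℂ) f).surjective
  have hgX : ∀ v, g (A.mulVec v) = (X : ℂ[X]) • g v := by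
    intro v
    have h1 : (Module.AEval.of ℂ (Fin n → ℂ) f) (A.mulVec v) =
        (X : ℂ[X]) • (Module.AEval.of ℂ (Fin n → ℂ) f) v := by
      rw [Module.AEval.X_smul_of]
      rfl
    simp only [hg, LinearMap.coe_comp, LinearEquiv.coe_coe, Function.comp_apply, h1]
    exact l.map_smul _ _
  refine ⟨(BDS B).compl₁₂ g g, ?_, ?_, ?_⟩
  · intro v w
    simp only [LinearMap.compl₁₂_apply, hgX]
    exact BDS_balanced B hbal _ _
  · intro v hv
    obtain ⟨w', hw'⟩ := BDS_nondeg_left B hndl (g v)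
      (fun h => hv (hginj (h.trans (map_zero g).symm)))
    obtain ⟨w, rfl⟩ := hgsurj w'
    exact ⟨w, by simpa using hw'⟩
  · intro w hw
    obtain ⟨v', hv'⟩ := BDS_nondeg_right B hndr (g w)
      (fun h => hw (hginj (h.trans (map_zero g).symm)))
    obtain ⟨v, rfl⟩ := hgsurj v'
    exact ⟨v, by simpa using hv'⟩

/-! ### Every complex matrix is similar to its transpose -/

theorem transpose_mul_eq_mul {n : ℕ} (A : Matrix (Fin n) (Fin n) ℂ) :
    ∃ P : Matrix (Fin n) (Fin n) ℂ, IsUnit P ∧ Aᵀ * P = P * A := by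
  classical
  obtain ⟨B, hbal, hl, hr⟩ := exists_balanced_pairing A
  set P : Matrix (Fin n) (Fin n) ℂ :=
    Matrix.of (fun i j => B (Pi.single i 1) (Pi.single j 1)) with hP
  have hform : ∀ v w, B v w = v ⬝ᵥ (P *ᵥ w) := by
    intro v w
    have hv : v = ∑ i, v i • (Pi.single i (1 : ℂ) : Fin n → ℂ) := by
      conv_lhs => rw [← Finset.univ_sum_single v]
      refine Finset.sum_congr rfl fun i _ => ?_
      rw [← Pi.single_smul, smul_eq_mul, mul_one]
    have hw : w = ∑ j, w j • (Pi.single j (1 : ℂ) : Fin n → ℂ) := by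
      conv_lhs => rw [← Finset.univ_sum_single w]
      refine Finset.sum_congr rfl fun j _ => ?_
      rw [← Pi.single_smul, smul_eq_mul, mul_one]
    conv_lhs => rw [hv, hw]
    simp only [map_sum, _root_.map_smul, LinearMap.sum_apply, LinearMap.smul_apply,
      smul_eq_mul, dotProduct, Matrix.mulVec, Finset.mul_sum, hP, Matrix.of_apply]
    rw [Finset.sum_comm]
    refine Finset.sum_congr rfl fun i _ => Finset.sum_congr rfl fun j _ => by ring
  have hdet : IsUnit P := by
    rw [Matrix.isUnit_iff_isUnit_det, isUnit_iff_ne_zero]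
    intro h0
    obtain ⟨w, hw0, hw⟩ := Matrix.exists_mulVec_eq_zero_iff.2 h0
    obtain ⟨v, hv⟩ := hr w hw0
    rw [hform, hw, dotProduct_zero] at hv
    exact hv rfl
  refine ⟨P, hdet, ?_⟩
  have key : ∀ v w, v ⬝ᵥ ((Aᵀ * P) *ᵥ w) = v ⬝ᵥ ((P * A) *ᵥ w) := by
    intro v w
    have hAv : ∀ (u : Fin n → ℂ), (A *ᵥ v) ⬝ᵥ u = v ⬝ᵥ (Aᵀ *ᵥ u) := by
      intro u
      rw [dotProduct_comm (A *ᵥ v) u, Matrix.dotProduct_mulVec,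
        Matrix.mulVec_transpose, dotProduct_comm v]
    have h1 : v ⬝ᵥ ((Aᵀ * P) *ᵥ w) = (A *ᵥ v) ⬝ᵥ (P *ᵥ w) := by
      rw [← Matrix.mulVec_mulVec, hAv]
    have h2 : v ⬝ᵥ ((P * A) *ᵥ w) = v ⬝ᵥ (P *ᵥ (A *ᵥ w)) := by
      rw [Matrix.mulVec_mulVec]
    rw [h1, h2, ← hform, ← hform]
    exact hbal v w
  ext i j
  have := key (Pi.single i 1) (Pi.single j 1)
  rwa [Matrix.mulVec_single_one, Matrix.mulVec_single_one,
    single_dotProduct, single_dotProduct, one_mul, one_mul,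
    Matrix.col_apply, Matrix.col_apply] at this

/-! ### Basic conjugation facts -/

lemma conj_conjTranspose_eq_transpose {n : ℕ} (H : Matrix (Fin n) (Fin n) ℂ) :
    Hᴴ.map (starRingEnd ℂ) = Hᵀ := by
  ext i j
  simp [Matrix.map_apply, Matrix.conjTranspose_apply]

lemma hermitian_conj_eq_transpose {n : ℕ} {G : Matrix (Fin n) (Fin n) ℂ}
    (hG : G.IsHermitian) : G.map (starRingEnd ℂ) = Gᵀ := by
  ext i j
  have := hG.apply i j
  simp only [Matrix.map_apply, Matrix.transpose_apply]
  rw [← this]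
  simp

lemma conjTranspose_eq_conj_transpose {n : ℕ} (H : Matrix (Fin n) (Fin n) ℂ) :
    Hᴴ = (H.map (starRingEnd ℂ))ᵀ := by
  ext i j
  simp [Matrix.conjTranspose_apply, Matrix.map_apply]

/-! ### The main theorem -/

end

/-- A matrix `H` is pseudo-Hermitian if there exists a nonsingular Hermitian
matrix `G` with `Hᴴ G = G H`. -/
def IsPseudoHermitian {n : ℕ} (H : Matrix (Fin n) (Fin n) ℂ) : Prop :=
  ∃ G : Matrix (Fin n) (Fin n) ℂ, IsUnit G ∧ G.IsHermitian ∧ Hᴴ * G = G * H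

/-- A matrix `H ∈ ℂ^{n×n}` is pseudo-Hermitian if and only if it is similar to its
entrywise complex conjugate `conj(H)`. -/
theorem pseudoHermitian_iff_similar_conj {n : ℕ} (H : Matrix (Fin n) (Fin n) ℂ) :
    IsPseudoHermitian H ↔
      ∃ Q : Matrix (Fin n) (Fin n) ℂ, IsUnit Q ∧
        H.map (starRingEnd ℂ) = Q⁻¹ * H * Q := by
  classical
  obtain ⟨P, hPu, hPe⟩ := transpose_mul_eq_mul H
  have hPdet : IsUnit P.det := (Matrix.isUnit_iff_isUnit_det P).1 hPu
  have hPP : P * P⁻¹ = 1 := Matrix.mul_nonsing_inv P hPdet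
  have hPP' : P⁻¹ * P = 1 := Matrix.nonsing_inv_mul P hPdet
  have hHt : Hᵀ = P * H * P⁻¹ := by
    rw [← hPe, Matrix.mul_assoc, hPP, Matrix.mul_one]
  constructor
  · rintro ⟨G, hGu, hGh, hGc⟩
    have hGdet : IsUnit G.det := (Matrix.isUnit_iff_isUnit_det G).1 hGu
    have hGtdet : IsUnit Gᵀ.det := by rwa [Matrix.det_transpose]
    have hconj : Hᵀ * Gᵀ = Gᵀ * (H.map (starRingEnd ℂ)) := by
      have := congrArg (fun M => M.map (starRingEnd ℂ)) hGc
      simpa only [Matrix.map_mul, conj_conjTranspose_eq_transpose,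
        hermitian_conj_eq_transpose hGh] using this
    set K := H.map (starRingEnd ℂ) with hK
    have hPinvu : IsUnit P⁻¹ := by
      rw [Matrix.isUnit_iff_isUnit_det, Matrix.det_nonsing_inv]
      exact isUnit_ringInverse.2 hPdet
    refine ⟨P⁻¹ * Gᵀ, hPinvu.mul ((Matrix.isUnit_iff_isUnit_det Gᵀ).2 hGtdet), ?_⟩
    have hQinv : (P⁻¹ * Gᵀ)⁻¹ = Gᵀ⁻¹ * P := by
      rw [Matrix.mul_inv_rev, Matrix.nonsing_inv_nonsing_inv P hPdet]
    rw [hQinv]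
    have h1 : K = Gᵀ⁻¹ * (Gᵀ * K) := by
      rw [← Matrix.mul_assoc, Matrix.nonsing_inv_mul _ hGtdet, Matrix.one_mul]
    rw [h1, ← hconj, hHt]
    simp only [Matrix.mul_assoc]
  · rintro ⟨Q, hQu, hQc⟩
    have hQdet : IsUnit Q.det := (Matrix.isUnit_iff_isUnit_det Q).1 hQu
    have hQtdet : IsUnit Qᵀ.det := by rwa [Matrix.det_transpose]
    set S : Matrix (Fin n) (Fin n) ℂ := Qᵀ * P with hS
    have hSu : IsUnit S := ((Matrix.isUnit_iff_isUnit_det Qᵀ).2 hQtdet).mul hPu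
    have hSdet : IsUnit S.det := (Matrix.isUnit_iff_isUnit_det S).1 hSu
    have hHconj : Hᴴ = Qᵀ * (Hᵀ * Qᵀ⁻¹) := by
      rw [conjTranspose_eq_conj_transpose, hQc, Matrix.transpose_mul, Matrix.transpose_mul,
        Matrix.transpose_nonsing_inv]
    have hHS : Hᴴ * S = S * H := by
      rw [hHconj, hS]
      have h2 : Qᵀ⁻¹ * Qᵀ = 1 := Matrix.nonsing_inv_mul _ hQtdet
      calc Qᵀ * (Hᵀ * Qᵀ⁻¹) * (Qᵀ * P)
          = Qᵀ * (Hᵀ * ((Qᵀ⁻¹ * Qᵀ) * P)) := by simp only [Matrix.mul_assoc]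
        _ = Qᵀ * (Hᵀ * P) := by rw [h2, Matrix.one_mul]
        _ = Qᵀ * (P * H) := by rw [hPe]
        _ = Qᵀ * P * H := by rw [Matrix.mul_assoc]
    have hHSH : Hᴴ * Sᴴ = Sᴴ * H := by
      have h3 := congrArg Matrix.conjTranspose hHS
      simp only [Matrix.conjTranspose_mul, Matrix.conjTranspose_conjTranspose] at h3
      exact h3.symm
    -- the Hermitian combination `G t = (S + Sᴴ) + t i (S - Sᴴ)`
    set Am : Matrix (Fin n) (Fin n) ℂ := S + Sᴴ with hAm
    set Bm : Matrix (Fin n) (Fin n) ℂ := Complex.I • (S - Sᴴ) with hBm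
    set F : Polynomial ℂ :=
      Matrix.det (Am.map Polynomial.C + (Polynomial.X : Polynomial ℂ) • Bm.map Polynomial.C)
      with hF
    have hFeval : ∀ z : ℂ, F.eval z = (Am + z • Bm).det := by
      intro z
      rw [hF, ← Polynomial.coe_evalRingHom, RingHom.map_det]
      congr 1
      ext i j
      simp only [RingHom.mapMatrix_apply, Matrix.map_apply, Matrix.add_apply, Matrix.smul_apply, smul_eq_mul,
        Polynomial.eval_add, Polynomial.eval_mul, Polynomial.eval_X, Polynomial.eval_C,
        Polynomial.coe_evalRingHom]
    have hFne : F ≠ 0 := by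
      intro h0
      have h1 : F.eval (-Complex.I) = (Am + (-Complex.I) • Bm).det := hFeval _
      have h2 : Am + (-Complex.I) • Bm = (2 : ℂ) • S := by
        rw [hAm, hBm, smul_smul]
        have h3 : (-Complex.I) * Complex.I = 1 := by
          rw [neg_mul, Complex.I_mul_I, neg_neg]
        rw [h3, one_smul, two_smul]
        abel
      rw [h2, Matrix.det_smul] at h1
      rw [h0] at h1
      simp only [Polynomial.eval_zero] at h1
      have h4 : ((2:ℂ) ^ Fintype.card (Fin n) * S.det) ≠ 0 :=
        mul_ne_zero (pow_ne_zero _ two_ne_zero) hSdet.ne_zero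
      exact h4 h1.symm
    have hinf : (Set.range ((↑) : ℝ → ℂ)).Infinite :=
      Set.infinite_range_of_injective Complex.ofReal_injective
    obtain ⟨z, hzr, hznr⟩ := (hinf.diff (Polynomial.finite_setOf_isRoot hFne)).nonempty
    obtain ⟨t, rfl⟩ := hzr
    have hGdet : (Am + (t : ℂ) • Bm).det ≠ 0 := by
      rw [← hFeval]
      intro h
      exact hznr h
    set G : Matrix (Fin n) (Fin n) ℂ := Am + (t : ℂ) • Bm with hG
    have hAmh : Amᴴ = Am := by
      rw [hAm, Matrix.conjTranspose_add, Matrix.conjTranspose_conjTranspose, add_comm]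
    have hBmh : Bmᴴ = Bm := by
      rw [hBm, Matrix.conjTranspose_smul, Matrix.conjTranspose_sub,
        Matrix.conjTranspose_conjTranspose]
      rw [show star Complex.I = -Complex.I from Complex.conj_I]
      rw [neg_smul, ← smul_neg, neg_sub]
    refine ⟨G, (Matrix.isUnit_iff_isUnit_det G).2 (isUnit_iff_ne_zero.2 hGdet), ?_, ?_⟩
    · show Gᴴ = G
      rw [hG, Matrix.conjTranspose_add, Matrix.conjTranspose_smul, hAmh, hBmh,
        show star ((t : ℝ) : ℂ) = ((t : ℝ) : ℂ) from Complex.conj_ofReal t]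
    · have h1 : Hᴴ * Am = Am * H := by
        rw [hAm, Matrix.mul_add, Matrix.add_mul, hHS, hHSH]
      have h2 : Hᴴ * Bm = Bm * H := by
        rw [hBm, Matrix.mul_smul, Matrix.smul_mul, Matrix.mul_sub, Matrix.sub_mul, hHS, hHSH]
      rw [hG, Matrix.mul_add, Matrix.add_mul, h1, Matrix.mul_smul, Matrix.smul_mul, h2]
end

section
/- Every PT-symmetric matrix H ∈ ℂ^{n×n} is pseudo-Hermitian: if there exists a matrix P ∈ ℂ^{n×n} with P² = I such that P·conj(H) = H·P, then there exists a nonsingular Hermitian matrix G ∈ ℂ^{n×n} such that Hᴴ G = G H. This holds regardless of whether H is diagonalizable. -/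
open Matrix Polynomial


/-- Auxiliary predicate: a `ℂ[X]`-module carries a symmetric, nondegenerate
`ℂ`-bilinear form for which multiplication by `X` is self-adjoint. -/
def GoodForm (M : Type) [AddCommGroup M] [Module ℂ[X] M] [Module ℂ M]
    [IsScalarTower ℂ ℂ[X] M] : Prop :=
  ∃ B : M →ₗ[ℂ] M →ₗ[ℂ] ℂ,
    (∀ x y, B x y = B y x) ∧
    (∀ x : M, (∀ y, B x y = 0) → x = 0) ∧
    (∀ x y, B ((X : ℂ[X]) • x) y = B x ((X : ℂ[X]) • y))

lemma GoodForm.congr {M N : Type} [AddCommGroup M] [Module ℂ[X] M] [Module ℂ M]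
    [IsScalarTower ℂ ℂ[X] M] [AddCommGroup N] [Module ℂ[X] N] [Module ℂ N]
    [IsScalarTower ℂ ℂ[X] N] (e : M ≃ₗ[ℂ[X]] N) (h : GoodForm N) : GoodForm M := by
  obtain ⟨B, hsymm, hnd, hX⟩ := h
  have hsm : ∀ (c : ℂ) (x : M), e (c • x) = c • e x := fun c x => by
    rw [← one_smul ℂ[X] x, ← smul_assoc, _root_.map_smul, smul_assoc]; simp
  refine ⟨LinearMap.mk₂ ℂ (fun x y => B (e x) (e y)) (fun x x' y => by simp)
    (fun c x y => by show B (e (c • x)) (e y) = c • B (e x) (e y); rw [hsm]; simp)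
    (fun x y y' => by simp)
    (fun c x y => by show B (e x) (e (c • y)) = c • B (e x) (e y); rw [hsm]; simp),
    fun x y => hsymm _ _, fun x hx => ?_,
    fun x y => by
      show B (e ((X : ℂ[X]) • x)) (e y) = B (e x) (e ((X : ℂ[X]) • y))
      rw [e.map_smul, e.map_smul]; exact hX _ _⟩
  have h0 : ∀ y, B (e x) y = 0 := fun y => by simpa using hx (e.symm y)
  have := hnd _ h0
  exact e.injective (by simpa using this)

lemma goodForm_quotient_monic (q : ℂ[X]) (hm : q.Monic) :
    GoodForm (ℂ[X] ⧸ (ℂ[X] ∙ q)) := by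
  classical
  rcases Nat.eq_zero_or_pos q.natDegree with hd | hd
  · have hq1 : q = 1 := hm.natDegree_eq_zero.mp hd
    subst hq1
    have htop : (ℂ[X] ∙ (1 : ℂ[X])) = ⊤ := by
      refine Submodule.eq_top_iff'.mpr fun x => ?_
      simpa using Submodule.smul_mem _ x (Submodule.mem_span_singleton_self (1 : ℂ[X]))
    haveI : Subsingleton (ℂ[X] ⧸ (ℂ[X] ∙ (1 : ℂ[X]))) :=
      Submodule.Quotient.subsingleton_iff.mpr htop
    exact ⟨0, by simp, fun x _ => Subsingleton.elim _ _, by simp⟩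
  · set d := q.natDegree with hdd
    set I : Submodule ℂ[X] ℂ[X] := ℂ[X] ∙ q with hI
    have hq0 : q ≠ 0 := hm.ne_zero
    have hmem : ∀ P : ℂ[X], P ∈ I ↔ q ∣ P := fun P => by
      rw [hI, Submodule.mem_span_singleton]
      constructor
      · rintro ⟨a, rfl⟩; exact Dvd.intro a (by rw [smul_eq_mul, mul_comm])
      · rintro ⟨a, rfl⟩; exact ⟨a, by rw [smul_eq_mul, mul_comm]⟩
    have hmod : ∀ P P' : ℂ[X], P - P' ∈ I → P %ₘ q = P' %ₘ q := by
      intro P P' h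
      have h0 : (P - P') %ₘ q = 0 :=
        (Polynomial.modByMonic_eq_zero_iff_dvd hm).mpr ((hmem _).mp h)
      have h2 : P %ₘ q - P' %ₘ q = 0 := by rw [← Polynomial.sub_modByMonic, h0]
      exact sub_eq_zero.mp h2
    set φ : ℂ[X] → ℂ[X] → ℂ := fun P S => ((P * S) %ₘ q).coeff (d - 1) with hφ
    have hwd : ∀ (P S P' S' : ℂ[X]), P - P' ∈ I → S - S' ∈ I → φ P S = φ P' S' := by
      intro P S P' S' h1 h2
      have hmem' : P * S - P' * S' ∈ I := by
        have e1 : P * S - P' * S' = S • (P - P') + P' • (S - S') := by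
          simp only [smul_eq_mul]; ring
        rw [e1]
        exact Submodule.add_mem _ (Submodule.smul_mem _ _ h1) (Submodule.smul_mem _ _ h2)
      simp only [hφ]
      rw [hmod _ _ hmem']
    set B0 : (ℂ[X] ⧸ I) → (ℂ[X] ⧸ I) → ℂ := fun x y =>
      Quotient.liftOn₂' x y φ (fun P S P' S' hP hS =>
        hwd P S P' S' ((Submodule.quotientRel_def I).mp hP)
          ((Submodule.quotientRel_def I).mp hS)) with hB0
    have hB0mk : ∀ P S : ℂ[X],
        B0 (Submodule.Quotient.mk P) (Submodule.Quotient.mk S) = φ P S := fun _ _ => rfl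
    have hadd1 : ∀ x x' y, B0 (x + x') y = B0 x y + B0 x' y := by
      intro x x' y
      obtain ⟨P, rfl⟩ := Submodule.Quotient.mk_surjective I x
      obtain ⟨P', rfl⟩ := Submodule.Quotient.mk_surjective I x'
      obtain ⟨S, rfl⟩ := Submodule.Quotient.mk_surjective I y
      rw [← Submodule.Quotient.mk_add, hB0mk, hB0mk, hB0mk]
      simp [hφ, add_mul, Polynomial.add_modByMonic]
    have hsmul1 : ∀ (c : ℂ) x y, B0 (c • x) y = c * B0 x y := by
      intro c x y
      obtain ⟨P, rfl⟩ := Submodule.Quotient.mk_surjective I x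
      obtain ⟨S, rfl⟩ := Submodule.Quotient.mk_surjective I y
      rw [← Submodule.Quotient.mk_smul, hB0mk, hB0mk]
      simp [hφ, smul_mul_assoc, Polynomial.smul_modByMonic, Polynomial.coeff_smul]
    have hsymm : ∀ x y, B0 x y = B0 y x := by
      intro x y
      obtain ⟨P, rfl⟩ := Submodule.Quotient.mk_surjective I x
      obtain ⟨S, rfl⟩ := Submodule.Quotient.mk_surjective I y
      rw [hB0mk, hB0mk, hφ]
      simp only [mul_comm]
    have hadd2 : ∀ x y y', B0 x (y + y') = B0 x y + B0 x y' := by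
      intro x y y'
      rw [hsymm x (y + y'), hadd1, hsymm y x, hsymm y' x]
    have hsmul2 : ∀ (c : ℂ) x y, B0 x (c • y) = c * B0 x y := by
      intro c x y
      rw [hsymm x (c • y), hsmul1, hsymm y x]
    refine ⟨LinearMap.mk₂ ℂ B0 hadd1 hsmul1 hadd2 hsmul2, fun x y => hsymm x y, ?_, ?_⟩
    · -- nondegeneracy
      intro x hx
      obtain ⟨P, rfl⟩ := Submodule.Quotient.mk_surjective I x
      by_contra hne
      set Pr := P %ₘ q with hPr
      have hmkPr : (Submodule.Quotient.mk P : ℂ[X] ⧸ I) = Submodule.Quotient.mk Pr := by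
        rw [Submodule.Quotient.eq]
        refine (hmem _).mpr ?_
        have := Polynomial.modByMonic_add_div P q
        exact ⟨P /ₘ q, by linear_combination this.symm⟩
      have hPr0 : Pr ≠ 0 := by
        intro h0
        apply hne
        rw [hmkPr, h0, Submodule.Quotient.mk_eq_zero]  -- mk 0 = 0
        exact Submodule.zero_mem I
      have hk : Pr.natDegree < d := by
        refine Polynomial.natDegree_lt_natDegree hPr0 ?_
        exact Polynomial.degree_modByMonic_lt P hm
      set k := Pr.natDegree with hkk
      have hval := hx (Submodule.Quotient.mk (X ^ (d - 1 - k)))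
      rw [LinearMap.mk₂_apply] at hval
      rw [hmkPr, hB0mk] at hval
      replace hval : ((Pr * X ^ (d - 1 - k)) %ₘ q).coeff (d - 1) = 0 := hval
      have hdeg : (Pr * X ^ (d - 1 - k)).degree < q.degree := by
        have h1 : (Pr * X ^ (d - 1 - k)).degree = ((k + (d - 1 - k) : ℕ) : WithBot ℕ) := by
          rw [Polynomial.degree_mul, Polynomial.degree_X_pow,
            Polynomial.degree_eq_natDegree hPr0]
          push_cast
          ring
        rw [h1, Polynomial.degree_eq_natDegree hq0]
        exact_mod_cast (by omega : k + (d - 1 - k) < d)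
      rw [(Polynomial.modByMonic_eq_self_iff hm).mpr hdeg] at hval
      have hco : (Pr * X ^ (d - 1 - k)).coeff (d - 1) = Pr.coeff k := by
        rw [Polynomial.coeff_mul_X_pow']
        rw [if_pos (by omega : d - 1 - k ≤ d - 1)]
        congr 1
        omega
      rw [hco] at hval
      exact Polynomial.leadingCoeff_ne_zero.mpr hPr0 hval
    · -- X-balanced
      intro x y
      obtain ⟨P, rfl⟩ := Submodule.Quotient.mk_surjective I x
      obtain ⟨S, rfl⟩ := Submodule.Quotient.mk_surjective I y
      rw [LinearMap.mk₂_apply, LinearMap.mk₂_apply, ← Submodule.Quotient.mk_smul,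
        ← Submodule.Quotient.mk_smul, hB0mk, hB0mk, hφ]
      simp only [smul_eq_mul]
      ring_nf

lemma goodForm_quotient (q : ℂ[X]) (hq : q ≠ 0) : GoodForm (ℂ[X] ⧸ (ℂ[X] ∙ q)) := by
  have hu : IsUnit (Polynomial.C q.leadingCoeff⁻¹) :=
    Polynomial.isUnit_C.mpr
      (isUnit_iff_ne_zero.mpr (inv_ne_zero (Polynomial.leadingCoeff_ne_zero.mpr hq)))
  have hspan : (ℂ[X] ∙ q) = ℂ[X] ∙ (q * Polynomial.C q.leadingCoeff⁻¹) :=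
    Submodule.span_singleton_eq_span_singleton.mpr
      ⟨hu.unit, by rw [Units.smul_def, IsUnit.unit_spec, smul_eq_mul, mul_comm]⟩
  exact GoodForm.congr (Submodule.quotEquivOfEq _ _ hspan)
    (goodForm_quotient_monic _ (Polynomial.monic_mul_leadingCoeff_inv hq))

open DirectSum in
lemma goodForm_directSum {ι : Type} [Fintype ι] [DecidableEq ι]
    (Q : ι → Type) [∀ i, AddCommGroup (Q i)] [∀ i, Module ℂ[X] (Q i)] [∀ i, Module ℂ (Q i)]
    [∀ i, IsScalarTower ℂ ℂ[X] (Q i)] (h : ∀ i, GoodForm (Q i)) :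
    GoodForm (⨁ i, Q i) := by
  choose B hsymm hnd hX using h
  refine ⟨LinearMap.mk₂ ℂ (fun x y => ∑ i, B i (x i) (y i))
    (fun x x' y => by simp [Finset.sum_add_distrib])
    (fun c x y => by
      show ∑ i, B i ((c • x) i) (y i) = c • ∑ i, B i (x i) (y i)
      rw [smul_eq_mul, Finset.mul_sum]
      exact Finset.sum_congr rfl fun i _ => by
        rw [DFinsupp.smul_apply, _root_.map_smul, LinearMap.smul_apply, smul_eq_mul])
    (fun x y y' => by simp [Finset.sum_add_distrib])
    (fun c x y => by
      show ∑ i, B i (x i) ((c • y) i) = c • ∑ i, B i (x i) (y i)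
      rw [smul_eq_mul, Finset.mul_sum]
      exact Finset.sum_congr rfl fun i _ => by
        rw [DFinsupp.smul_apply, _root_.map_smul, smul_eq_mul]),
    fun x y => Finset.sum_congr rfl fun i _ => hsymm i _ _, fun x hx => ?_, fun x y => ?_⟩
  · refine DFinsupp.ext fun j => ?_
    refine hnd j (x j) fun z => ?_
    have := hx (DirectSum.of Q j z)
    rw [LinearMap.mk₂_apply] at this
    rw [Finset.sum_eq_single j (fun i _ hij => by
      rw [DirectSum.of_eq_of_ne _ _ _ hij]; simp) (by simp)] at this
    · rwa [DirectSum.of_eq_same] at this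
  · simp only [LinearMap.mk₂_apply]
    refine Finset.sum_congr rfl fun i _ => ?_
    rw [DFinsupp.smul_apply, DFinsupp.smul_apply]
    exact hX i _ _

open Module in
lemma exists_transpose_intertwiner {n : ℕ} (A : Matrix (Fin n) (Fin n) ℂ) :
    ∃ S : Matrix (Fin n) (Fin n) ℂ, IsUnit S ∧ Aᵀ * S = S * A := by
  classical
  set f : (Fin n → ℂ) →ₗ[ℂ] (Fin n → ℂ) := A.mulVecLin with hf
  have htors : Module.IsTorsion ℂ[X] (AEval' f) := by
    intro x
    refine ⟨⟨f.charpoly, mem_nonZeroDivisors_of_ne_zero f.charpoly_monic.ne_zero⟩, ?_⟩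
    apply (AEval'.of f).symm.injective
    rw [map_zero]
    show (AEval'.of f).symm (f.charpoly • x) = 0
    rw [Module.AEval.of_symm_smul, LinearMap.aeval_self_charpoly]
    simp
  obtain ⟨ι, hι, p, hp, e, ⟨E⟩⟩ := Module.equiv_directSum_of_isTorsion htors
  haveI := hι
  have hgf : GoodForm (AEval' f) :=
    GoodForm.congr E (goodForm_directSum _ fun i =>
      goodForm_quotient _ (pow_ne_zero _ (hp i).ne_zero))
  obtain ⟨B, hsymm, hnd, hX⟩ := hgf
  set e0 := AEval'.of f with he0
  set B0 : (Fin n → ℂ) → (Fin n → ℂ) → ℂ := fun x y => B (e0 x) (e0 y) with hB0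
  set S : Matrix (Fin n) (Fin n) ℂ :=
    Matrix.of (fun i j => B0 (Pi.single i 1) (Pi.single j 1)) with hS
  have hsingle : ∀ x : Fin n → ℂ, x = ∑ i, x i • (Pi.single i (1 : ℂ) : Fin n → ℂ) := by
    intro x
    funext k
    simp [Finset.sum_apply, Pi.single_apply]
  have step1 : ∀ (i : Fin n) (y : Fin n → ℂ), B0 (Pi.single i 1) y = (S *ᵥ y) i := by
    intro i y
    show B (e0 (Pi.single i 1)) (e0 y) = (S *ᵥ y) i
    nth_rewrite 1 [hsingle y]
    rw [_root_.map_sum, _root_.map_sum]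
    simp only [_root_.map_smul, smul_eq_mul, Matrix.mulVec, dotProduct, hS,
      Matrix.of_apply]
    exact Finset.sum_congr rfl fun j _ => by rw [hB0]; ring
  have hBS : ∀ x y, B0 x y = x ⬝ᵥ (S *ᵥ y) := by
    intro x y
    show B (e0 x) (e0 y) = x ⬝ᵥ (S *ᵥ y)
    nth_rewrite 1 [hsingle x]
    rw [_root_.map_sum, _root_.map_sum, LinearMap.sum_apply, dotProduct]
    refine Finset.sum_congr rfl fun i _ => ?_
    rw [e0.map_smul, B.map_smul, LinearMap.smul_apply, smul_eq_mul, ← step1 i y]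
  have hsymm0 : ∀ x y, B0 x y = B0 y x := fun x y => hsymm _ _
  have hint : ∀ x y, B0 (f x) y = B0 x (f y) := by
    intro x y
    have := hX (e0 x) (e0 y)
    rwa [Module.AEval'.X_smul_of, Module.AEval'.X_smul_of] at this
  have hdet : S.det ≠ 0 := by
    intro h0
    obtain ⟨v, hv0, hv⟩ := Matrix.exists_mulVec_eq_zero_iff.mpr h0
    apply hv0
    have : e0 v = 0 := by
      refine hnd _ fun y => ?_
      obtain ⟨w, rfl⟩ := e0.surjective y
      show B0 v w = 0
      rw [hsymm0, hBS, hv, dotProduct_zero]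
    simpa using congrArg e0.symm this
  have hAS : Aᵀ * S = S * A := by
    ext i j
    have h1 := hint (Pi.single i 1) (Pi.single j 1)
    rw [hBS, hBS] at h1
    show (Aᵀ * S) i j = (S * A) i j
    have hfx : ∀ (k : Fin n), f (Pi.single k 1) = fun l => A l k := by
      intro k
      rw [hf]
      funext l
      simp [Matrix.mulVecLin_apply, Matrix.mulVec_single]
    rw [hfx i, hfx j] at h1
    calc (Aᵀ * S) i j = (fun l => A l i) ⬝ᵥ S *ᵥ Pi.single j 1 := by
          simp [Matrix.mul_apply, dotProduct, Matrix.mulVec_single,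
            Matrix.transpose_apply, mul_comm]
      _ = Pi.single i 1 ⬝ᵥ S *ᵥ fun l => A l j := h1
      _ = (S * A) i j := by
          rw [single_dotProduct, one_mul]
          simp [Matrix.mul_apply, Matrix.mulVec, dotProduct]
  exact ⟨S, (Matrix.isUnit_iff_isUnit_det S).mpr (isUnit_iff_ne_zero.mpr hdet), hAS⟩

/-- A matrix `H` is PT-symmetric if there exists `P` with `P² = I` such that
`P · conj(H) = H · P`. -/
def IsPTSymmetric {n : ℕ} (H : Matrix (Fin n) (Fin n) ℂ) : Prop :=
  ∃ P : Matrix (Fin n) (Fin n) ℂ, P * P = 1 ∧ P * H.map (starRingEnd ℂ) = H * P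

/-- In finite dimensions, every PT-symmetric Hamiltonian is pseudo-Hermitian,
regardless of whether it is diagonalizable or not. -/
theorem ptSymmetric_pseudoHermitian {n : ℕ} (H : Matrix (Fin n) (Fin n) ℂ)
    (hPT : IsPTSymmetric H) : IsPseudoHermitian H := by
  obtain ⟨P, hP2, hPH⟩ := hPT
  obtain ⟨T, hTu, hTint⟩ := exists_transpose_intertwiner H
  have hPt : Pᵀ * Pᵀ = 1 := by rw [← Matrix.transpose_mul, hP2, Matrix.transpose_one]
  have hconj : H.map (starRingEnd ℂ) = P * H * P := by
    calc H.map (starRingEnd ℂ) = (P * P) * H.map (starRingEnd ℂ) := by rw [hP2, one_mul]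
      _ = P * (P * H.map (starRingEnd ℂ)) := by rw [mul_assoc]
      _ = P * (H * P) := by rw [hPH]
      _ = P * H * P := by rw [mul_assoc]
  have hHH : Hᴴ = Pᵀ * Hᵀ * Pᵀ := by
    have h1 : Hᴴ = (H.map (starRingEnd ℂ))ᵀ := by
      ext i j
      simp [Matrix.conjTranspose_apply, Matrix.transpose_apply, Matrix.map_apply]
    rw [h1, hconj, Matrix.transpose_mul, Matrix.transpose_mul, ← mul_assoc]
  set S0 := Pᵀ * T with hS0def
  have hS0 : Hᴴ * S0 = S0 * H := by
    rw [hHH, hS0def]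
    calc Pᵀ * Hᵀ * Pᵀ * (Pᵀ * T) = Pᵀ * Hᵀ * (Pᵀ * Pᵀ) * T := by
          rw [mul_assoc (Pᵀ * Hᵀ) Pᵀ (Pᵀ * T), ← mul_assoc Pᵀ Pᵀ T, ← mul_assoc]
      _ = Pᵀ * (Hᵀ * T) := by rw [hPt, mul_one, mul_assoc]
      _ = Pᵀ * T * H := by rw [hTint, ← mul_assoc]
  have hS0u : IsUnit S0 := by
    have hPu : IsUnit Pᵀ := by
      rw [Matrix.isUnit_iff_isUnit_det]
      exact IsUnit.of_mul_eq_one _ (by rw [← Matrix.det_mul, hPt, Matrix.det_one])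
    rw [hS0def]
    exact hPu.mul hTu
  have hS0H : Hᴴ * S0ᴴ = S0ᴴ * H := by
    have h := congrArg Matrix.conjTranspose hS0
    simp only [Matrix.conjTranspose_mul, Matrix.conjTranspose_conjTranspose] at h
    exact h.symm
  set A0 := S0 + S0ᴴ with hA0def
  set B0 := Complex.I • (S0 - S0ᴴ) with hB0def
  have hA0int : Hᴴ * A0 = A0 * H := by
    rw [hA0def, mul_add, add_mul, hS0, hS0H]
  have hB0int : Hᴴ * B0 = B0 * H := by
    rw [hB0def, Matrix.mul_smul, Matrix.smul_mul, mul_sub, sub_mul, hS0, hS0H]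
  have hA0h : A0ᴴ = A0 := by
    rw [hA0def, Matrix.conjTranspose_add, Matrix.conjTranspose_conjTranspose, add_comm]
  have hB0h : B0ᴴ = B0 := by
    rw [hB0def, Matrix.conjTranspose_smul, Matrix.conjTranspose_sub,
      Matrix.conjTranspose_conjTranspose]
    rw [Complex.star_def, Complex.conj_I, neg_smul, ← smul_neg, neg_sub]
  set pdet : Polynomial ℂ :=
    (A0.map Polynomial.C + (Polynomial.X : ℂ[X]) • B0.map Polynomial.C).det with hpdet
  have heval : ∀ z : ℂ, pdet.eval z = (A0 + z • B0).det := by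
    intro z
    have hmap : (A0.map Polynomial.C + (Polynomial.X : ℂ[X]) • B0.map Polynomial.C).map
        (Polynomial.evalRingHom z) = A0 + z • B0 := by
      ext i j
      simp only [Matrix.map_apply, Matrix.add_apply, Matrix.smul_apply, smul_eq_mul,
        Polynomial.eval_add, Polynomial.eval_mul, Polynomial.eval_C, Polynomial.eval_X,
        Polynomial.coe_evalRingHom]
    rw [hpdet, ← hmap]
    exact RingHom.map_det (Polynomial.evalRingHom z) _
  have hdetS0 : S0.det ≠ 0 := by
    have := (Matrix.isUnit_iff_isUnit_det S0).mp hS0u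
    exact this.ne_zero
  have hp0 : pdet ≠ 0 := by
    intro h0
    have h1 := heval (-Complex.I)
    rw [h0, Polynomial.eval_zero] at h1
    have h2 : A0 + (-Complex.I) • B0 = (2 : ℂ) • S0 := by
      rw [hA0def, hB0def, smul_smul]
      have : (-Complex.I) * Complex.I = 1 := by
        rw [neg_mul, Complex.I_mul_I, neg_neg]
      rw [this, one_smul, two_smul]
      abel
    rw [h2] at h1
    have h3 : ((2 : ℂ) • S0).det = (2 : ℂ) ^ n * S0.det := by
      simp [Matrix.det_smul]
    rw [h3] at h1
    have : (2 : ℂ) ^ n * S0.det ≠ 0 := mul_ne_zero (pow_ne_zero _ two_ne_zero) hdetS0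
    exact this h1.symm
  have hfin := Polynomial.finite_setOf_isRoot hp0
  have hinf : (Set.range (Complex.ofReal)).Infinite :=
    Set.infinite_range_of_injective Complex.ofReal_injective
  obtain ⟨z, hzr, hz⟩ : ∃ z ∈ Set.range (Complex.ofReal), ¬ pdet.IsRoot z := by
    by_contra hc
    push_neg at hc
    exact hinf (hfin.subset hc)
  obtain ⟨t, rfl⟩ := hzr
  refine ⟨A0 + (t : ℂ) • B0, ?_, ?_, ?_⟩
  · rw [Matrix.isUnit_iff_isUnit_det, isUnit_iff_ne_zero, ← heval]
    exact hz
  · show (A0 + (t : ℂ) • B0)ᴴ = A0 + (t : ℂ) • B0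
    rw [Matrix.conjTranspose_add, Matrix.conjTranspose_smul, hA0h, hB0h,
      Complex.star_def, Complex.conj_ofReal]
  · rw [mul_add, add_mul, hA0int, Matrix.mul_smul, Matrix.smul_mul, hB0int]
end

section
/- Let λ ∈ ℂ and let M ∈ ℂ^{2m×2m} be the block-diagonal matrix M = diag(J(λ), J(conj λ)), where J(μ) ∈ ℂ^{m×m} is the Jordan block with eigenvalue μ. Let E ∈ ℂ^{2m×2m} be the exchange matrix, E_{ij} = 1 if i + j = 2m − 1 and 0 otherwise. Then E is Hermitian, nonsingular, and Mᴴ E = E M; in particular, the direct sum of a pair of Jordan blocks with complex-conjugate eigenvalues is pseudo-Hermitian. -/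
open Matrix

def jordanBlock (m : ℕ) (μ : ℂ) : Matrix (Fin m) (Fin m) ℂ :=
  fun i j => if (j : ℕ) = (i : ℕ) then μ else if (j : ℕ) = (i : ℕ) + 1 then 1 else 0

def exchangeMatrix (n : ℕ) : Matrix (Fin n) (Fin n) ℂ :=
  fun i j => if (i : ℕ) + (j : ℕ) = n - 1 then 1 else 0

def pairedJordanBlocks (m : ℕ) (lam : ℂ) : Matrix (Fin (m + m)) (Fin (m + m)) ℂ :=
  (Matrix.fromBlocks (jordanBlock m lam) 0 0
      (jordanBlock m (starRingEnd ℂ lam))).submatrix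
    finSumFinEquiv.symm finSumFinEquiv.symm

lemma exchange_hermitian (n : ℕ) : (exchangeMatrix n).IsHermitian := by
  ext i j
  simp only [conjTranspose_apply, exchangeMatrix]
  rw [add_comm (j : ℕ)]
  split_ifs <;> simp

lemma exchange_mul_self (n : ℕ) : exchangeMatrix n * exchangeMatrix n = 1 := by
  ext i j
  simp only [mul_apply, exchangeMatrix]
  rw [Finset.sum_eq_single (Fin.rev i)]
  · have h1 : (Fin.rev i : ℕ) = n - (i + 1) := Fin.val_rev i
    have hi := i.isLt
    have hj := j.isLt
    have h2 : (i : ℕ) + (Fin.rev i : ℕ) = n - 1 := by omega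
    rw [if_pos h2]
    by_cases h : i = j
    · subst h
      rw [if_pos (by omega), Matrix.one_apply_eq]
      ring
    · have : (i : ℕ) ≠ (j : ℕ) := fun hh => h (Fin.ext hh)
      rw [if_neg (by omega), Matrix.one_apply_ne h]
      ring
  · intro k _ hk
    have h1 : (Fin.rev i : ℕ) = n - (i + 1) := Fin.val_rev i
    have : (k : ℕ) ≠ (Fin.rev i : ℕ) := fun hh => hk (Fin.ext hh)
    have hi := i.isLt
    have hkk := k.isLt
    rw [if_neg (by omega)]
    ring
  · intro h
    exact absurd (Finset.mem_univ _) h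

lemma key (m : ℕ) (μ : ℂ) :
    (jordanBlock m μ)ᴴ * exchangeMatrix m
      = exchangeMatrix m * jordanBlock m (starRingEnd ℂ μ) := by
  ext i j
  simp only [mul_apply, conjTranspose_apply, jordanBlock, exchangeMatrix]
  have hi := i.isLt
  have hj := j.isLt
  rw [Finset.sum_eq_single (Fin.rev j), Finset.sum_eq_single (Fin.rev i)]
  · have h1 : (Fin.rev i : ℕ) = m - (i + 1) := Fin.val_rev i
    have h2 : (Fin.rev j : ℕ) = m - (j + 1) := Fin.val_rev j
    rw [if_pos (show (Fin.rev j : ℕ) + (j:ℕ) = m - 1 by omega),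
        if_pos (show (i:ℕ) + (Fin.rev i : ℕ) = m - 1 by omega)]
    rw [mul_one, one_mul]
    by_cases hd : (i : ℕ) = (Fin.rev j : ℕ)
    · rw [if_pos hd, if_pos (show (j:ℕ) = (Fin.rev i : ℕ) by omega)]
      rfl
    · rw [if_neg hd, if_neg (show (j:ℕ) ≠ (Fin.rev i : ℕ) by omega)]
      by_cases hs : (i : ℕ) = (Fin.rev j : ℕ) + 1
      · rw [if_pos hs, if_pos (show (j:ℕ) = (Fin.rev i : ℕ) + 1 by omega)]
        simp
      · rw [if_neg hs, if_neg (show (j:ℕ) ≠ (Fin.rev i : ℕ) + 1 by omega)]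
        simp
  · intro k _ hk
    have h1 : (Fin.rev i : ℕ) = m - (i + 1) := Fin.val_rev i
    have : (k : ℕ) ≠ (Fin.rev i : ℕ) := fun hh => hk (Fin.ext hh)
    have hkk := k.isLt
    rw [if_neg (show (i:ℕ) + (k:ℕ) ≠ m - 1 by omega)]
    ring
  · intro h; exact absurd (Finset.mem_univ _) h
  · intro k _ hk
    have h2 : (Fin.rev j : ℕ) = m - (j + 1) := Fin.val_rev j
    have : (k : ℕ) ≠ (Fin.rev j : ℕ) := fun hh => hk (Fin.ext hh)
    have hkk := k.isLt
    rw [if_neg (show (k:ℕ) + (j:ℕ) ≠ m - 1 by omega)]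
    ring
  · intro h; exact absurd (Finset.mem_univ _) h

lemma exchange_blocks (m : ℕ) :
    exchangeMatrix (m + m)
      = (Matrix.fromBlocks 0 (exchangeMatrix m) (exchangeMatrix m) 0).submatrix
          finSumFinEquiv.symm finSumFinEquiv.symm := by
  ext i j
  obtain ⟨x, rfl⟩ : ∃ x, finSumFinEquiv x = i := ⟨_, Equiv.apply_symm_apply _ _⟩
  obtain ⟨y, rfl⟩ : ∃ y, finSumFinEquiv y = j := ⟨_, Equiv.apply_symm_apply _ _⟩
  simp only [submatrix_apply, Equiv.symm_apply_apply]
  rcases x with a | a <;> rcases y with b | b <;>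
    simp only [finSumFinEquiv_apply_left, finSumFinEquiv_apply_right,
      fromBlocks_apply₁₁, fromBlocks_apply₁₂, fromBlocks_apply₂₁, fromBlocks_apply₂₂,
      exchangeMatrix, Fin.coe_castAdd, Fin.coe_natAdd, Matrix.zero_apply] <;>
    [skip; skip; skip; skip]
  · have ha := a.isLt; have hb := b.isLt
    exact if_neg (show ¬ ((a:ℕ) + (b:ℕ) = m + m - 1) by omega)
  · have ha := a.isLt; have hb := b.isLt
    have : (a:ℕ) + (m + (b:ℕ)) = m + m - 1 ↔ (a:ℕ) + (b:ℕ) = m - 1 := by omega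
    simp only [this]
  · have ha := a.isLt; have hb := b.isLt
    have : m + (a:ℕ) + (b:ℕ) = m + m - 1 ↔ (a:ℕ) + (b:ℕ) = m - 1 := by omega
    simp only [this]
  · have ha := a.isLt; have hb := b.isLt
    exact if_neg (show ¬ (m + (a:ℕ) + (m + (b:ℕ)) = m + m - 1) by omega)

/-- The `2m × 2m` exchange matrix `E` is Hermitian and nonsingular, and the direct
sum `M = diag(J(λ), J(conj λ))` of a pair of Jordan blocks with complex-conjugate
eigenvalues satisfies `Mᴴ E = E M`; in particular such a matrix is pseudo-Hermitian. -/
theorem pairedJordanBlocks_pseudoHermitian (m : ℕ) (lam : ℂ) :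
    (exchangeMatrix (m + m)).IsHermitian ∧ IsUnit (exchangeMatrix (m + m)) ∧
      (pairedJordanBlocks m lam)ᴴ * exchangeMatrix (m + m) =
        exchangeMatrix (m + m) * pairedJordanBlocks m lam := by
  refine ⟨exchange_hermitian _, ⟨⟨exchangeMatrix (m+m), exchangeMatrix (m+m), exchange_mul_self _, exchange_mul_self _⟩, rfl⟩, ?_⟩
  rw [pairedJordanBlocks, exchange_blocks, conjTranspose_submatrix,
    fromBlocks_conjTranspose,
    Matrix.submatrix_mul_equiv _ _ _ finSumFinEquiv.symm _,
    Matrix.submatrix_mul_equiv _ _ _ finSumFinEquiv.symm _,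
    fromBlocks_multiply, fromBlocks_multiply]
  simp [key, Complex.conj_conj]
end

section
/- If a matrix H ∈ ℂ^{n×n} is pseudo-Hermitian, then its eigenvalues are symmetric with respect to the real axis: the characteristic polynomial of H has real coefficients, equivalently, applying complex conjugation to each coefficient of the characteristic polynomial of H leaves it unchanged; hence λ ∈ ℂ is an eigenvalue of H if and only if conj(λ) is, with the same algebraic multiplicity. -/
open Matrix Polynomial

lemma my_charmatrix_transpose {m : ℕ} (M : Matrix (Fin m) (Fin m) ℂ) :
    charmatrix Mᵀ = (charmatrix M)ᵀ :=
  Matrix.ext fun i j => by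
    by_cases h : i = j
    · subst h
      simp [charmatrix_apply_eq, transpose_apply]
    · simp [charmatrix_apply_ne _ _ _ h, charmatrix_apply_ne _ _ _ (Ne.symm h),
        transpose_apply]

lemma my_charpoly_transpose {m : ℕ} (M : Matrix (Fin m) (Fin m) ℂ) :
    Mᵀ.charpoly = M.charpoly := by
  rw [Matrix.charpoly, Matrix.charpoly, my_charmatrix_transpose, det_transpose]

lemma my_charpoly_conj {m : ℕ} (U M : Matrix (Fin m) (Fin m) ℂ) (hU : IsUnit U) :
    (U * M * U⁻¹).charpoly = M.charpoly := by
  have hUV : U * U⁻¹ = 1 := mul_nonsing_inv U ((isUnit_iff_isUnit_det _).mp hU)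
  have hVU : U⁻¹ * U = 1 := nonsing_inv_mul U ((isUnit_iff_isUnit_det _).mp hU)
  set U' := U.map (C : ℂ →+* ℂ[X]) with hU'
  set V := U⁻¹.map (C : ℂ →+* ℂ[X]) with hV
  have hUV' : U' * V = 1 := by
    rw [hU', hV, ← Matrix.map_mul, hUV, Matrix.map_one _ (map_zero C) (map_one C)]
  have hVU' : V * U' = 1 := by
    rw [hU', hV, ← Matrix.map_mul, hVU, Matrix.map_one _ (map_zero C) (map_one C)]
  have key : charmatrix (U * M * U⁻¹) = U' * charmatrix M * V := by
    rw [charmatrix]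
    rw [charmatrix]
    rw [mul_sub, sub_mul]
    congr 1
    · -- U' * scalar X * V = scalar X
      have : U' * (Matrix.scalar (Fin m)) (X : ℂ[X]) = (Matrix.scalar (Fin m)) (X : ℂ[X]) * U' := by
        exact (Matrix.scalar_commute (n := Fin m) (X : ℂ[X]) (fun r' => Commute.all _ _) U').eq.symm
      rw [this, mul_assoc, hUV', mul_one]
    · show (C : ℂ →+* ℂ[X]).mapMatrix (U * M * U⁻¹) = _
      rw [_root_.map_mul, _root_.map_mul]
      rfl
  rw [Matrix.charpoly, Matrix.charpoly, key, det_mul, det_mul]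
  have : U'.det * V.det = 1 := by
    rw [← det_mul, hUV', det_one]
  calc U'.det * (charmatrix M).det * V.det
      = U'.det * V.det * (charmatrix M).det := by ring
    _ = (charmatrix M).det := by rw [this, one_mul]

/-- If `H` is pseudo-Hermitian then its eigenvalues are symmetric with respect to
the real axis: the characteristic polynomial of `H` is fixed by coefficientwise
complex conjugation (i.e. all of its coefficients are real), and hence `λ` is an
eigenvalue of `H` iff `conj λ` is, with the same algebraic multiplicity. -/
theorem pseudoHermitian_charpoly_real {n : ℕ} (H : Matrix (Fin n) (Fin n) ℂ)
    (hH : IsPseudoHermitian H) :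
    H.charpoly.map (starRingEnd ℂ) = H.charpoly ∧
    (∀ i : ℕ, (H.charpoly.coeff i).im = 0) ∧
    (∀ μ : ℂ, H.charpoly.rootMultiplicity μ =
      H.charpoly.rootMultiplicity (starRingEnd ℂ μ)) := by
  obtain ⟨G, hG, hGH, hcomm⟩ := hH
  have hGdet : IsUnit G.det := (isUnit_iff_isUnit_det _).mp hG
  have hsim : Hᴴ = G * H * G⁻¹ := by
    rw [← hcomm, mul_assoc, mul_nonsing_inv _ hGdet, mul_one]
  have h1 : H.charpoly.map (starRingEnd ℂ) = H.charpoly := by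
    have : (H.map (starRingEnd ℂ)).charpoly = H.charpoly := by
      have hHt : (H.map (starRingEnd ℂ))ᵀ = Hᴴ := rfl
      calc (H.map (starRingEnd ℂ)).charpoly
          = ((H.map (starRingEnd ℂ))ᵀ).charpoly := (my_charpoly_transpose _).symm
        _ = Hᴴ.charpoly := by rw [hHt]
        _ = (G * H * G⁻¹).charpoly := by rw [hsim]
        _ = H.charpoly := my_charpoly_conj _ _ hG
    rw [← Matrix.charpoly_map, this]
  refine ⟨h1, ?_, ?_⟩
  · intro i
    have := congrArg (fun p => Polynomial.coeff p i) h1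
    simp only [Polynomial.coeff_map] at this
    have h2 : (starRingEnd ℂ) (H.charpoly.coeff i) = H.charpoly.coeff i := this
    have := Complex.conj_eq_iff_im.mp h2
    exact this
  · intro μ
    calc H.charpoly.rootMultiplicity μ
        = (H.charpoly.map (starRingEnd ℂ)).rootMultiplicity ((starRingEnd ℂ) μ) :=
          eq_rootMultiplicity_map (starRingEnd ℂ).injective μ
      _ = H.charpoly.rootMultiplicity ((starRingEnd ℂ) μ) := by rw [h1]
end

section
/- If the requirement P² = I is dropped from the definition of PT-symmetry, then PT-symmetry and pseudo-Hermiticity are equivalent in finite dimensions: a matrix H ∈ ℂ^{n×n} is pseudo-Hermitian if and only if there exists an invertible matrix P ∈ ℂ^{n×n} (not necessarily satisfying P² = I) such that P·conj(H) = H·P. -/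
open Matrix

section Auxiliary

open Polynomial

lemma monic_form (m : ℂ[X]) (hm : m.Monic) :
    ∃ β : (ℂ[X] ⧸ (Submodule.span ℂ[X] {m})) →ₗ[ℂ]
          (ℂ[X] ⧸ (Submodule.span ℂ[X] {m})) →ₗ[ℂ] ℂ,
      (∀ x, x ≠ 0 → ∃ y, β x y ≠ 0) ∧
      (∀ (c : ℂ[X]) x y, β (c • x) y = β x (c • y)) := by
  rcases eq_or_ne m.natDegree 0 with hd | hd
  · have hm1 : m = 1 := hm.natDegree_eq_zero.mp hd
    have : Subsingleton (ℂ[X] ⧸ (Submodule.span ℂ[X] {m})) := by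
      rw [Submodule.Quotient.subsingleton_iff, hm1]
      exact Ideal.span_singleton_one
    exact ⟨0, fun x hx => absurd (Subsingleton.elim x 0) hx, by simp⟩
  · set d := m.natDegree with hddef
    set I : Submodule ℂ[X] ℂ[X] := Submodule.span ℂ[X] {m} with hI
    have hmemI : ∀ u : ℂ[X], u ∈ I ↔ m ∣ u := fun u => Ideal.mem_span_singleton
    set lam0 : ℂ[X] →ₗ[ℂ] ℂ := (lcoeff ℂ (d-1)).comp (modByMonicHom m) with hlam
    have hlam0 : ∀ u : ℂ[X], lam0 u = (u %ₘ m).coeff (d-1) := fun u => rfl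
    have hker : I.restrictScalars ℂ ≤ LinearMap.ker lam0 := by
      intro u hu
      simp only [LinearMap.mem_ker, hlam0,
        (modByMonic_eq_zero_iff_dvd hm).mpr ((hmemI u).mp hu), coeff_zero]
    set lamQ : (ℂ[X] ⧸ I) →ₗ[ℂ] ℂ :=
      (Submodule.liftQ (I.restrictScalars ℂ) lam0 hker).comp
        (Submodule.Quotient.restrictScalarsEquiv ℂ I).symm.toLinearMap with hlamQdef
    have hlamQ : ∀ u : ℂ[X], lamQ (Submodule.Quotient.mk u) = (u %ₘ m).coeff (d-1) :=
      fun u => rfl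
    set β : (ℂ[X] ⧸ I) →ₗ[ℂ] (ℂ[X] ⧸ I) →ₗ[ℂ] ℂ :=
      LinearMap.mk₂ ℂ (fun x y => lamQ (x * y))
        (fun x x' y => by simp [add_mul])
        (fun c x y => by simp [smul_mul_assoc])
        (fun x y y' => by simp [mul_add])
        (fun c x y => by simp [mul_smul_comm]) with hβ
    have hβapp : ∀ u v : ℂ[X],
        β (Submodule.Quotient.mk u) (Submodule.Quotient.mk v)
          = ((u * v) %ₘ m).coeff (d-1) := fun u v => rfl
    refine ⟨β, ?_, ?_⟩
    · intro x hx
      obtain ⟨u, rfl⟩ := Submodule.Quotient.mk_surjective _ x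
      set r := u %ₘ m with hr
      have hrne : r ≠ 0 := by
        intro h0
        exact hx ((Submodule.Quotient.mk_eq_zero _).mpr
          ((hmemI u).mpr ((modByMonic_eq_zero_iff_dvd hm).mp h0)))
      have hrd : r.natDegree < d :=
        natDegree_lt_natDegree hrne (degree_modByMonic_lt u hm)
      set k := d - 1 - r.natDegree with hk
      have hkey : r.natDegree + k = d - 1 := by omega
      refine ⟨Submodule.Quotient.mk (X ^ k), ?_⟩
      rw [hβapp]
      have hmod : (u * X ^ k) %ₘ m = r * X ^ k := by
        conv_lhs => rw [← modByMonic_add_div u m]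
        rw [add_mul, add_modByMonic, mul_assoc, self_mul_modByMonic hm, add_zero,
          modByMonic_eq_self_iff hm]
        calc degree (r * X ^ k) ≤ (↑(r.natDegree + k) : WithBot ℕ) := by
              rw [Nat.cast_add]
              exact (degree_mul_le _ _).trans
                (add_le_add degree_le_natDegree (degree_X_pow_le k))
          _ < degree m := by
              rw [degree_eq_natDegree hm.ne_zero, Nat.cast_lt, hkey]
              omega
      rw [hmod, ← hkey, coeff_mul_X_pow]
      exact mt leadingCoeff_eq_zero.mp hrne
    · intro c x y
      obtain ⟨u, rfl⟩ := Submodule.Quotient.mk_surjective _ x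
      obtain ⟨v, rfl⟩ := Submodule.Quotient.mk_surjective _ y
      rw [← Submodule.Quotient.mk_smul, ← Submodule.Quotient.mk_smul, smul_eq_mul,
        smul_eq_mul, hβapp, hβapp]
      ring_nf

lemma cyclic_form (g : ℂ[X]) (hg : g ≠ 0) :
    ∃ β : (ℂ[X] ⧸ (Submodule.span ℂ[X] {g})) →ₗ[ℂ]
          (ℂ[X] ⧸ (Submodule.span ℂ[X] {g})) →ₗ[ℂ] ℂ,
      (∀ x, x ≠ 0 → ∃ y, β x y ≠ 0) ∧
      (∀ (c : ℂ[X]) x y, β (c • x) y = β x (c • y)) := by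
  have hu : IsUnit (C g.leadingCoeff⁻¹) :=
    isUnit_C.mpr (isUnit_iff_ne_zero.mpr (inv_ne_zero (leadingCoeff_ne_zero.mpr hg)))
  have hm : (g * C g.leadingCoeff⁻¹).Monic := monic_mul_leadingCoeff_inv hg
  have hspan : Submodule.span ℂ[X] ({g} : Set ℂ[X]) =
      Submodule.span ℂ[X] {g * C g.leadingCoeff⁻¹} :=
    (Ideal.span_singleton_eq_span_singleton.mpr (Associated.symm ⟨hu.unit, rfl⟩)).symm
  rw [hspan]
  exact monic_form _ hm

/-- Every endomorphism of a f.d. complex vector space is self-adjoint with respect to some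
nondegenerate bilinear form. -/
lemma exists_form {n : ℕ} (a : (Fin n → ℂ) →ₗ[ℂ] (Fin n → ℂ)) :
    ∃ B : (Fin n → ℂ) →ₗ[ℂ] (Fin n → ℂ) →ₗ[ℂ] ℂ,
      (∀ x, x ≠ 0 → ∃ y, B x y ≠ 0) ∧ (∀ x y, B (a x) y = B x (a y)) := by
  have tor : Module.IsTorsion ℂ[X] (Module.AEval' a) :=
    Module.AEval.isTorsion_of_finiteDimensional ℂ (Fin n → ℂ) a
  obtain ⟨ι, hfin, p, hp, e, ⟨ψ⟩⟩ := Module.equiv_directSum_of_isTorsion tor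
  haveI := hfin
  haveI : DecidableEq ι := Classical.decEq ι
  choose βs hsep hcomp using fun i =>
    cyclic_form (p i ^ e i) (pow_ne_zero _ (hp i).ne_zero)
  set QQ : ι → Type _ := fun i => ℂ[X] ⧸ Submodule.span ℂ[X] {p i ^ e i} with hQQ
  set Φ0 : Module.AEval' a ≃ₗ[ℂ[X]] (∀ i, QQ i) :=
    ψ.trans (DirectSum.linearEquivFunOnFintype ℂ[X] ι QQ) with hΦ0
  set Φ : (Fin n → ℂ) ≃ₗ[ℂ] (∀ i, QQ i) :=
    (Module.AEval'.of a).trans (Φ0.restrictScalars ℂ) with hΦ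
  have hΦX : ∀ x, Φ (a x) = (X : ℂ[X]) • (Φ x) := by
    intro x
    show Φ0 (Module.AEval'.of a (a x)) = (X : ℂ[X]) • Φ0 (Module.AEval'.of a x)
    rw [← Module.AEval'.X_smul_of, _root_.map_smul]
  set B0 : (∀ i, QQ i) →ₗ[ℂ] (∀ i, QQ i) →ₗ[ℂ] ℂ :=
    LinearMap.mk₂ ℂ (fun u v => ∑ i, βs i (u i) (v i))
      (fun u u' v => by simp [Finset.sum_add_distrib])
      (fun c u v => by simp [smul_eq_mul, Finset.mul_sum])
      (fun u v v' => by simp [Finset.sum_add_distrib])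
      (fun c u v => by simp [smul_eq_mul, Finset.mul_sum]) with hB0
  have hB0app : ∀ u v, B0 u v = ∑ i, βs i (u i) (v i) := fun u v => rfl
  set BB : (Fin n → ℂ) →ₗ[ℂ] (Fin n → ℂ) →ₗ[ℂ] ℂ :=
    LinearMap.mk₂ ℂ (fun x y => B0 (Φ x) (Φ y))
    (fun x x' y => by simp) (fun c x y => by simp)
    (fun x y y' => by simp) (fun c x y => by simp) with hBB
  have hBBapp : ∀ x y, BB x y = B0 (Φ x) (Φ y) := fun x y => rfl
  refine ⟨BB, ?_, ?_⟩
  · intro x hx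
    have hΦx : Φ x ≠ 0 := fun h => hx (by simpa using Φ.map_eq_zero_iff.mp h)
    obtain ⟨i, hi⟩ : ∃ i, Φ x i ≠ 0 := by
      by_contra hc
      push_neg at hc
      exact hΦx (funext hc)
    obtain ⟨y0, hy0⟩ := hsep i (Φ x i) hi
    refine ⟨Φ.symm (Pi.single i y0), ?_⟩
    rw [hBBapp, Φ.apply_symm_apply, hB0app]
    rw [Finset.sum_eq_single i]
    · simpa using hy0
    · intro j _ hj
      rw [Pi.single_eq_of_ne hj, map_zero]
    · intro h
      exact absurd (Finset.mem_univ i) h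
  · intro x y
    rw [hBBapp, hBBapp, hΦX, hΦX, hB0app, hB0app]
    refine Finset.sum_congr rfl fun i _ => ?_
    rw [Pi.smul_apply, Pi.smul_apply]
    exact hcomp i X (Φ x i) (Φ y i)

/-- Taussky: every complex square matrix is similar to its transpose. -/
lemma taussky {n : ℕ} (M : Matrix (Fin n) (Fin n) ℂ) :
    ∃ R : Matrix (Fin n) (Fin n) ℂ, IsUnit R ∧ R * Mᵀ = M * R := by
  obtain ⟨B, hsep, hcomp⟩ := exists_form M.mulVecLin
  set S : Matrix (Fin n) (Fin n) ℂ := Matrix.of (fun i j => B (Pi.single i 1) (Pi.single j 1))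
    with hS
  have hSapp : ∀ i j, S i j = B (Pi.single i 1) (Pi.single j 1) := fun i j => rfl
  have hsingle : ∀ i : Fin n, (fun j => if i = j then (1:ℂ) else 0) = Pi.single i 1 := by
    intro i
    funext j
    rw [Pi.single_apply]
    simp [eq_comm]
  have hx1 : ∀ x y : Fin n → ℂ, B x y = ∑ i, x i * B (Pi.single i 1) y := by
    intro x y
    conv_lhs => rw [pi_eq_sum_univ x, map_sum, LinearMap.sum_apply]
    simp only [_root_.map_smul, LinearMap.smul_apply, smul_eq_mul]
    exact Finset.sum_congr rfl fun i _ => by rw [hsingle]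
  have hy1 : ∀ (u y : Fin n → ℂ), B u y = ∑ j, y j * B u (Pi.single j 1) := by
    intro u y
    conv_lhs => rw [pi_eq_sum_univ y, map_sum]
    simp only [_root_.map_smul, smul_eq_mul]
    exact Finset.sum_congr rfl fun j _ => by rw [hsingle]
  have h1 : ∀ x y : Fin n → ℂ, B x y = x ⬝ᵥ (S *ᵥ y) := by
    intro x y
    rw [hx1, dotProduct]
    refine Finset.sum_congr rfl fun i _ => ?_
    rw [hy1, Matrix.mulVec, dotProduct]
    congr 1
    refine Finset.sum_congr rfl fun j _ => ?_
    rw [hSapp, mul_comm]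
  -- S is invertible
  have hdet : IsUnit S.det := by
    rw [isUnit_iff_ne_zero]
    intro h0
    have hdt : Sᵀ.det = 0 := by rw [Matrix.det_transpose]; exact h0
    obtain ⟨v, hv, hv0⟩ := (Matrix.exists_mulVec_eq_zero_iff).mpr hdt
    obtain ⟨y, hy⟩ := hsep v hv
    apply hy
    have hvS : v ᵥ* S = Sᵀ *ᵥ v := by
      rw [← Matrix.transpose_transpose S, Matrix.vecMul_transpose, Matrix.transpose_transpose]
    rw [h1, Matrix.dotProduct_mulVec, hvS, hv0, zero_dotProduct]
  -- intertwining relation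
  have h2 : Mᵀ * S = S * M := by
    ext i j
    have := hcomp (Pi.single i 1) (Pi.single j 1)
    rw [h1, h1] at this
    have lhs_eq : (M *ᵥ Pi.single i 1) ⬝ᵥ (S *ᵥ Pi.single j 1) = (Mᵀ * S) i j := by
      rw [Matrix.mulVec_single, Matrix.mulVec_single]
      rw [Matrix.mul_apply, dotProduct]
      refine Finset.sum_congr rfl fun k _ => ?_
      simp [Matrix.transpose_apply, mul_comm]
    have rhs_eq : (Pi.single i 1 : Fin n → ℂ) ⬝ᵥ (S *ᵥ (M *ᵥ Pi.single j 1)) = (S * M) i j := by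
      rw [Matrix.mulVec_mulVec, Matrix.mulVec_single, single_dotProduct]
      simp
    rw [Matrix.mulVecLin_apply, Matrix.mulVecLin_apply] at this
    rw [← lhs_eq, this, rhs_eq]
  have hinv : IsUnit S⁻¹ := by
    rw [Matrix.isUnit_iff_isUnit_det, Matrix.det_nonsing_inv]
    simpa [Ring.inverse_eq_inv'] using isUnit_iff_ne_zero.mpr (inv_ne_zero (isUnit_iff_ne_zero.mp hdet))
  refine ⟨S⁻¹, hinv, ?_⟩
  have h3 : S⁻¹ * (Mᵀ * S) * S⁻¹ = S⁻¹ * (S * M) * S⁻¹ := by rw [h2]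
  calc S⁻¹ * Mᵀ = S⁻¹ * Mᵀ * (S * S⁻¹) := by rw [Matrix.mul_nonsing_inv S hdet, mul_one]
    _ = S⁻¹ * (Mᵀ * S) * S⁻¹ := by rw [mul_assoc, mul_assoc, mul_assoc]
    _ = S⁻¹ * (S * M) * S⁻¹ := h3
    _ = (S⁻¹ * S) * M * S⁻¹ := by rw [mul_assoc, mul_assoc, mul_assoc, mul_assoc]
    _ = M * S⁻¹ := by rw [Matrix.nonsing_inv_mul S hdet, one_mul]

lemma isUnit_transpose' {n : ℕ} {A : Matrix (Fin n) (Fin n) ℂ} (h : IsUnit A) : IsUnit Aᵀ := by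
  rw [Matrix.isUnit_iff_isUnit_det, Matrix.det_transpose]
  exact (Matrix.isUnit_iff_isUnit_det A).mp h

lemma inv_intertwine {n : ℕ} {R A B : Matrix (Fin n) (Fin n) ℂ} (h : IsUnit R)
    (hr : R * A = B * R) : A * R⁻¹ = R⁻¹ * B := by
  have hdet : IsUnit R.det := (Matrix.isUnit_iff_isUnit_det R).mp h
  calc A * R⁻¹ = (R⁻¹ * R) * A * R⁻¹ := by rw [Matrix.nonsing_inv_mul R hdet, one_mul]
    _ = R⁻¹ * (R * A) * R⁻¹ := by noncomm_ring
    _ = R⁻¹ * (B * R) * R⁻¹ := by rw [hr]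
    _ = R⁻¹ * B * (R * R⁻¹) := by rw [mul_assoc, mul_assoc, mul_assoc]
    _ = R⁻¹ * B := by rw [Matrix.mul_nonsing_inv R hdet, mul_one]

/-- From any invertible intertwiner between `Hᴴ` and `H` one can build a Hermitian one. -/
lemma hermitianize {n : ℕ} (H A : Matrix (Fin n) (Fin n) ℂ) (hA : IsUnit A)
    (hrel : Hᴴ * A = A * H) : IsPseudoHermitian H := by
  have hrel' : Hᴴ * Aᴴ = Aᴴ * H := by
    have := congrArg Matrix.conjTranspose hrel
    rw [Matrix.conjTranspose_mul, Matrix.conjTranspose_mul, Matrix.conjTranspose_conjTranspose]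
      at this
    exact this.symm
  -- the polynomial det((1 + i X) A + (1 - i X) Aᴴ)
  set Mq : Matrix (Fin n) (Fin n) ℂ[X] :=
    (1 + C Complex.I * X) • A.map C + (1 - C Complex.I * X) • Aᴴ.map C with hMq
  set q : ℂ[X] := Mq.det with hq
  have heval : ∀ z : ℂ, eval z q =
      ((1 + Complex.I * z) • A + (1 - Complex.I * z) • Aᴴ).det := by
    intro z
    have : eval z q = (evalRingHom z) q := rfl
    rw [this, hq, RingHom.map_det]
    congr 1
    ext i j
    simp [hMq, Matrix.map_apply, Matrix.add_apply, Matrix.smul_apply, smul_eq_mul]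
  have hq0 : q ≠ 0 := by
    intro h0
    have h2 : eval (-Complex.I) q = (2:ℂ) ^ n * A.det := by
      rw [heval]
      have e1 : (1 + Complex.I * -Complex.I) = (2:ℂ) := by
        simp [Complex.I_mul_I]; ring
      have e2 : (1 - Complex.I * -Complex.I) = (0:ℂ) := by
        simp [Complex.I_mul_I]
      rw [e1, e2, zero_smul, add_zero, Matrix.det_smul]
      simp
    rw [h0, eval_zero] at h2
    have : A.det ≠ 0 := isUnit_iff_ne_zero.mp ((Matrix.isUnit_iff_isUnit_det A).mp hA)
    apply this
    field_simp at h2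
    simpa using h2
  -- pick a real point avoiding the roots
  have hfin : Set.Finite { z : ℂ | q.IsRoot z } := Polynomial.finite_setOf_isRoot hq0
  have hinf : (Set.range (Complex.ofReal)).Infinite :=
    Set.infinite_range_of_injective Complex.ofReal_injective
  obtain ⟨z, hzmem, hznot⟩ := (hinf.diff hfin).nonempty
  obtain ⟨t, rfl⟩ := hzmem
  set G : Matrix (Fin n) (Fin n) ℂ :=
    (1 + Complex.I * t) • A + (1 - Complex.I * t) • Aᴴ with hG
  have hdetG : G.det ≠ 0 := by
    rw [← heval]
    exact hznot
  refine ⟨G, (Matrix.isUnit_iff_isUnit_det G).mpr (isUnit_iff_ne_zero.mpr hdetG), ?_, ?_⟩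
  · show Gᴴ = G
    rw [hG, Matrix.conjTranspose_add, Matrix.conjTranspose_smul, Matrix.conjTranspose_smul,
      Matrix.conjTranspose_conjTranspose]
    have c1 : star (1 + Complex.I * (t:ℂ)) = 1 - Complex.I * t := by
      simp [Complex.ext_iff]
    have c2 : star (1 - Complex.I * (t:ℂ)) = 1 + Complex.I * t := by
      simp [Complex.ext_iff]
    rw [c1, c2, add_comm]
  · rw [hG, Matrix.mul_add, Matrix.add_mul, Matrix.mul_smul, Matrix.smul_mul,
      Matrix.mul_smul, Matrix.smul_mul, hrel, hrel']

end Auxiliary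

/-- If the requirement `P² = I` is dropped from the definition of PT-symmetry, then
PT-symmetry and pseudo-Hermiticity are equivalent in finite dimensions: `H` is
pseudo-Hermitian iff there exists an invertible `P` with `P · conj(H) = H · P`. -/
theorem pseudoHermitian_iff_generalized_ptSymmetric {n : ℕ}
    (H : Matrix (Fin n) (Fin n) ℂ) :
    IsPseudoHermitian H ↔
      ∃ P : Matrix (Fin n) (Fin n) ℂ, IsUnit P ∧
        P * H.map (starRingEnd ℂ) = H * P := by
  have hconjT : ∀ X : Matrix (Fin n) (Fin n) ℂ, (X.map (starRingEnd ℂ))ᵀ = Xᴴ := by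
    intro X
    rfl
  constructor
  · rintro ⟨G, hGu, hGh, hGrel⟩
    obtain ⟨R, hRu, hR⟩ := taussky H
    -- conjugate the relation
    have hmap := congrArg (fun X : Matrix (Fin n) (Fin n) ℂ => X.map (starRingEnd ℂ)) hGrel
    simp only [Matrix.map_mul] at hmap
    have hHc : Hᴴ.map (starRingEnd ℂ) = Hᵀ := by
      ext i j
      simp [Matrix.map_apply, Matrix.conjTranspose_apply, Matrix.transpose_apply]
    have hGc : G.map (starRingEnd ℂ) = Gᵀ := by
      have h1 : Gᴴ = G := hGh
      calc G.map (starRingEnd ℂ) = ((G.map (starRingEnd ℂ))ᵀ)ᵀ := by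
            rw [Matrix.transpose_transpose]
        _ = Gᵀ := by rw [hconjT G, h1]
    rw [hHc, hGc] at hmap
    -- hmap : Hᵀ * Gᵀ = Gᵀ * H.map conj
    refine ⟨R * Gᵀ, hRu.mul (isUnit_transpose' hGu), ?_⟩
    calc R * Gᵀ * H.map (starRingEnd ℂ) = R * (Gᵀ * H.map (starRingEnd ℂ)) := by
          rw [mul_assoc]
      _ = R * (Hᵀ * Gᵀ) := by rw [← hmap]
      _ = (R * Hᵀ) * Gᵀ := by rw [mul_assoc]
      _ = (H * R) * Gᵀ := by rw [hR]
      _ = H * (R * Gᵀ) := by rw [mul_assoc]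
  · rintro ⟨P, hPu, hPrel⟩
    obtain ⟨R, hRu, hR⟩ := taussky H
    -- transpose the relation:  Hᴴ * Pᵀ = Pᵀ * Hᵀ
    have htrans := congrArg Matrix.transpose hPrel
    rw [Matrix.transpose_mul, Matrix.transpose_mul, hconjT H] at htrans
    -- htrans : Hᴴ * Pᵀ = Pᵀ * Hᵀ
    have hW : Hᵀ * R⁻¹ = R⁻¹ * H := inv_intertwine hRu hR
    have hRinv : IsUnit R⁻¹ := by
      rw [Matrix.isUnit_iff_isUnit_det, Matrix.det_nonsing_inv]
      simpa [Ring.inverse_eq_inv'] using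
        isUnit_iff_ne_zero.mpr (inv_ne_zero (isUnit_iff_ne_zero.mp
          ((Matrix.isUnit_iff_isUnit_det R).mp hRu)))
    refine hermitianize H (Pᵀ * R⁻¹) ((isUnit_transpose' hPu).mul hRinv) ?_
    calc Hᴴ * (Pᵀ * R⁻¹) = (Hᴴ * Pᵀ) * R⁻¹ := by rw [mul_assoc]
      _ = (Pᵀ * Hᵀ) * R⁻¹ := by rw [htrans]
      _ = Pᵀ * (Hᵀ * R⁻¹) := by rw [mul_assoc]
      _ = Pᵀ * (R⁻¹ * H) := by rw [hW]
      _ = (Pᵀ * R⁻¹) * H := by rw [mul_assoc]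
end

section
/- Let k, u₁₀, u₂₀, ρ₁₀, ρ₂₀, g ∈ ℝ with ρ₁₀ + ρ₂₀ ≠ 0, let H be the Kelvin–Helmholtz Hamiltonian, and set Δ = −|k|g(ρ₁₀² − ρ₂₀²) − k²ρ₁₀ρ₂₀(u₁₀ − u₂₀)². For any δ ∈ ℂ with δ² = Δ, the characteristic polynomial of H factors as (X − a₁)(X − a₂), where a₁ = (k(ρ₁₀u₁₀ + ρ₂₀u₂₀) − δ)/(ρ₁₀+ρ₂₀) and a₂ = (k(ρ₁₀u₁₀ + ρ₂₀u₂₀) + δ)/(ρ₁₀+ρ₂₀); in particular a₁ and a₂ are exactly the eigenvalues of H. -/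
open Matrix Polynomial

/-- The Kelvin–Helmholtz Hamiltonian. -/
noncomputable def KHHamiltonian (k u10 u20 ρ10 ρ20 g : ℝ) :
    Matrix (Fin 2) (Fin 2) ℂ :=
  !![((-k * (-u10 * ρ10 - 2 * u20 * ρ20 + u10 * ρ20) / (ρ10 + ρ20) : ℝ) : ℂ),
      (-Complex.I * (|k| : ℝ) * ((u10 - u20) ^ 2 : ℝ) * (ρ20 : ℝ)
        + Complex.I * (g : ℝ) * ((ρ20 - ρ10 : ℝ) : ℂ)) / ((ρ10 + ρ20 : ℝ) : ℂ);
      -Complex.I * (|k| : ℝ), ((k * u10 : ℝ) : ℂ)]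

/-- The discriminant `Δ = −|k| g (ρ₁₀² − ρ₂₀²) − k² ρ₁₀ ρ₂₀ (u₁₀ − u₂₀)²`. -/
noncomputable def KHDiscriminant (k u10 u20 ρ10 ρ20 g : ℝ) : ℝ :=
  -|k| * g * (ρ10 ^ 2 - ρ20 ^ 2) - k ^ 2 * ρ10 * ρ20 * (u10 - u20) ^ 2

lemma KH.charpoly_2x2 (a b c d : ℂ) : (!![a,b;c,d]).charpoly
    = X^2 - C (a + d) * X + C (a*d - b*c) := by
  rw [Matrix.charpoly, Matrix.det_fin_two]
  simp [charmatrix_apply_eq, charmatrix_apply_ne]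
  ring

lemma KH.factor_quad (a b : ℂ) :
    (X^2 - C (a + b) * X + C (a*b) : ℂ[X]) = (X - C a) * (X - C b) := by
  simp only [C_add, C_mul]
  ring

lemma KH.spec_iff (M : Matrix (Fin 2) (Fin 2) ℂ) (μ : ℂ) :
    μ ∈ spectrum ℂ M ↔ M.charpoly.eval μ = 0 := by
  rw [spectrum.mem_iff, Matrix.isUnit_iff_isUnit_det, isUnit_iff_ne_zero, not_ne_iff,
    Matrix.charpoly]
  have : eval μ M.charmatrix.det = ((algebraMap ℂ (Matrix (Fin 2) (Fin 2) ℂ)) μ - M).det := by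
    rw [show (eval μ M.charmatrix.det) = (Polynomial.evalRingHom μ) M.charmatrix.det from rfl,
      RingHom.map_det]
    congr 1
    ext i j
    rcases eq_or_ne i j with h | h
    · subst h; simp [charmatrix_apply_eq, Matrix.algebraMap_matrix_apply]
    · simp [charmatrix_apply_ne _ _ _ h, Matrix.algebraMap_matrix_apply, h]
  rw [this]

/-- For any square root `δ` of the discriminant `Δ`, the characteristic polynomial of
the Kelvin–Helmholtz Hamiltonian factors as `(X − a₁)(X − a₂)` with
`a₁ = (k(ρ₁₀u₁₀ + ρ₂₀u₂₀) − δ)/(ρ₁₀+ρ₂₀)` and `a₂ = (k(ρ₁₀u₁₀ + ρ₂₀u₂₀) + δ)/(ρ₁₀+ρ₂₀)`;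
in particular `a₁` and `a₂` are exactly the eigenvalues of `H`. -/
theorem kh_charpoly_eigenvalues (k u10 u20 ρ10 ρ20 g : ℝ) (hρ : ρ10 + ρ20 ≠ 0)
    (δ : ℂ) (hδ : δ ^ 2 = (KHDiscriminant k u10 u20 ρ10 ρ20 g : ℂ)) :
    (KHHamiltonian k u10 u20 ρ10 ρ20 g).charpoly =
        (X - C ((((k * (ρ10 * u10 + ρ20 * u20) : ℝ) : ℂ) - δ) / ((ρ10 + ρ20 : ℝ) : ℂ))) *
        (X - C ((((k * (ρ10 * u10 + ρ20 * u20) : ℝ) : ℂ) + δ) / ((ρ10 + ρ20 : ℝ) : ℂ))) ∧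
      spectrum ℂ (KHHamiltonian k u10 u20 ρ10 ρ20 g) =
        {(((k * (ρ10 * u10 + ρ20 * u20) : ℝ) : ℂ) - δ) / ((ρ10 + ρ20 : ℝ) : ℂ),
         (((k * (ρ10 * u10 + ρ20 * u20) : ℝ) : ℂ) + δ) / ((ρ10 + ρ20 : ℝ) : ℂ)} := by
  have hρC : ((ρ10 : ℂ) + ρ20) ≠ 0 := by
    intro h; exact hρ (by exact_mod_cast h)
  have hk2 : ((|k| : ℝ) : ℂ) ^ 2 = ((k : ℝ) : ℂ) ^ 2 := by
    norm_cast; exact sq_abs k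
  have hI : (Complex.I) ^ 2 = -1 := Complex.I_sq
  rw [KHDiscriminant] at hδ
  push_cast at hδ
  set a1 : ℂ := (((k * (ρ10 * u10 + ρ20 * u20) : ℝ) : ℂ) - δ) / ((ρ10 + ρ20 : ℝ) : ℂ) with ha1
  set a2 : ℂ := (((k * (ρ10 * u10 + ρ20 * u20) : ℝ) : ℂ) + δ) / ((ρ10 + ρ20 : ℝ) : ℂ) with ha2
  have key : (KHHamiltonian k u10 u20 ρ10 ρ20 g).charpoly = (X - C a1) * (X - C a2) := by
    rw [KHHamiltonian, KH.charpoly_2x2, ← KH.factor_quad]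
    have hsum : ((-k * (-u10 * ρ10 - 2 * u20 * ρ20 + u10 * ρ20) / (ρ10 + ρ20) : ℝ) : ℂ)
        + ((k * u10 : ℝ) : ℂ) = a1 + a2 := by
      rw [ha1, ha2]
      push_cast
      field_simp
      ring
    have hprod : ((-k * (-u10 * ρ10 - 2 * u20 * ρ20 + u10 * ρ20) / (ρ10 + ρ20) : ℝ) : ℂ)
          * ((k * u10 : ℝ) : ℂ)
        - ((-Complex.I * (|k| : ℝ) * ((u10 - u20) ^ 2 : ℝ) * (ρ20 : ℝ)
            + Complex.I * (g : ℝ) * ((ρ20 - ρ10 : ℝ) : ℂ)) / ((ρ10 + ρ20 : ℝ) : ℂ))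
          * (-Complex.I * (|k| : ℝ)) = a1 * a2 := by
      rw [ha1, ha2]
      push_cast
      set r : ℂ := (ρ10 : ℂ) + ρ20 with hr
      set K : ℂ := ((|k| : ℝ) : ℂ) with hK
      set T : ℂ := (k : ℂ) * ((ρ10 : ℂ) * u10 + (ρ20 : ℂ) * u20) with hT
      set nA : ℂ := -(k : ℂ) * (-(u10:ℂ) * ρ10 - 2 * u20 * ρ20 + u10 * ρ20) with hnA
      set nB : ℂ := -Complex.I * K * ((u10:ℂ) - u20) ^ 2 * ρ20
        + Complex.I * g * ((ρ20:ℂ) - ρ10) with hnB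
      set Cc : ℂ := -Complex.I * K with hCc
      set D : ℂ := (k : ℂ) * u10 with hD
      have hclear : (nA * D - nB * Cc) * r = T ^ 2 - δ ^ 2 := by
        rw [hδ]
        linear_combination (((u10:ℂ)-u20)^2 * ρ20 * r) * hk2
          + (-(K^2 * (((u10:ℂ)-u20)^2 * ρ20) - K * g * ((ρ20:ℂ)-ρ10)) * r) * hI
      have h1 : (T - δ) / r * ((T + δ) / r) = (T^2 - δ^2) / (r * r) := by
        rw [div_mul_div_comm]; ring_nf
      have h2 : nA / r * D - nB / r * Cc = (nA * D - nB * Cc) / r := by ring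
      rw [h1, h2, ← hclear, mul_div_mul_right _ _ hρC]
    rw [hsum, hprod]
  refine ⟨key, ?_⟩
  ext μ
  rw [KH.spec_iff, key]
  simp only [eval_mul, eval_sub, eval_X, eval_C, mul_eq_zero, sub_eq_zero,
    Set.mem_insert_iff, Set.mem_singleton_iff]
end

section
/- Let k, u₁₀, u₂₀, ρ₁₀, ρ₂₀, g ∈ ℝ with k ≠ 0 and ρ₁₀, ρ₂₀ > 0, and suppose τ = (|k|(u₁₀−u₂₀)²ρ₂₀ − g(ρ₂₀−ρ₁₀))/(ρ₁₀+ρ₂₀) < 0. Then the quantity Δ = −|k|g(ρ₁₀² − ρ₂₀²) − k²ρ₁₀ρ₂₀(u₁₀ − u₂₀)² is strictly positive, and consequently all eigenvalues of the Kelvin–Helmholtz Hamiltonian H are real (the PT-symmetric system is stable). -/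
open Matrix

/-- If `k ≠ 0`, `ρ₁₀, ρ₂₀ > 0` and `τ = (|k|(u₁₀−u₂₀)²ρ₂₀ − g(ρ₂₀−ρ₁₀))/(ρ₁₀+ρ₂₀) < 0`,
then the discriminant `Δ` is strictly positive and all eigenvalues of the
Kelvin–Helmholtz Hamiltonian are real (the PT-symmetric system is stable). -/
theorem kh_stable_of_tau_neg (k u10 u20 ρ10 ρ20 g : ℝ) (hk : k ≠ 0)
    (hρ10 : 0 < ρ10) (hρ20 : 0 < ρ20)
    (hτ : (|k| * (u10 - u20) ^ 2 * ρ20 - g * (ρ20 - ρ10)) / (ρ10 + ρ20) < 0) :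
    0 < KHDiscriminant k u10 u20 ρ10 ρ20 g ∧
      ∀ μ ∈ spectrum ℂ (KHHamiltonian k u10 u20 ρ10 ρ20 g), μ.im = 0 := by
  have hpos : (0:ℝ) < ρ10 + ρ20 := by positivity
  have hk' : 0 < |k| := abs_pos.mpr hk
  have hnum : |k| * (u10 - u20) ^ 2 * ρ20 - g * (ρ20 - ρ10) < 0 := by
    have h := mul_neg_of_neg_of_pos hτ hpos
    rwa [div_mul_cancel₀ _ hpos.ne'] at h
  have hP : 0 < (g * (ρ20 - ρ10) - |k| * (u10 - u20) ^ 2 * ρ20) * |k| :=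
    mul_pos (by linarith) hk'
  constructor
  · unfold KHDiscriminant
    rw [show k ^ 2 = |k| ^ 2 from (sq_abs k).symm]
    nlinarith [mul_pos (mul_pos hk' hpos) (by linarith : (0:ℝ) < g * (ρ20 - ρ10) - |k| * (u10 - u20) ^ 2 * ρ20), sq_nonneg (|k| * (u10 - u20) * ρ20)]
  · intro μ hμ
    rw [spectrum.mem_iff] at hμ
    have hdet : ((algebraMap ℂ (Matrix (Fin 2) (Fin 2) ℂ)) μ
        - KHHamiltonian k u10 u20 ρ10 ρ20 g).det = 0 := by
      by_contra h
      exact hμ ((Matrix.isUnit_iff_isUnit_det _).mpr (isUnit_iff_ne_zero.mpr h))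
    have hden : ((ρ10 : ℂ) + ρ20) ≠ 0 := by exact_mod_cast hpos.ne'
    simp [Matrix.det_fin_two, KHHamiltonian, Matrix.algebraMap_matrix_apply] at hdet
    have e1 : ((u10:ℂ) - u20) ^ 2 = (((u10 - u20) ^ 2 : ℝ) : ℂ) := by push_cast; ring
    rw [e1] at hdet
    field_simp at hdet
    rw [Complex.ext_iff] at hdet
    simp at hdet
    have e2 : (((u10:ℂ) - u20) ^ 2).re = (u10 - u20) ^ 2 := by rw [e1]; exact Complex.ofReal_re _
    have e3 : (((u10:ℂ) - u20) ^ 2).im = 0 := by rw [e1]; exact Complex.ofReal_im _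
    rw [e2, e3] at hdet
    obtain ⟨h1, h2⟩ := hdet
    set x := μ.re with hx
    set y := μ.im with hy
    have h2' : y * (2 * x * (ρ10 + ρ20)
        + k * (-(u10 * ρ10) - 2 * u20 * ρ20 + u10 * ρ20) - k * u10 * (ρ10 + ρ20)) = 0 := by
      linear_combination h2
    rcases mul_eq_zero.mp h2' with h | h
    · exact h
    · exfalso
      have key : (x * (ρ10 + ρ20) + k * (-(u10 * ρ10) - 2 * u20 * ρ20 + u10 * ρ20)) ^ 2
          + (y * (ρ10 + ρ20)) ^ 2
          + (g * (ρ20 - ρ10) - |k| * (u10 - u20) ^ 2 * ρ20) * |k| * (ρ10 + ρ20) = 0 := by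
        linear_combination (x * (ρ10 + ρ20) + k * (-(u10 * ρ10) - 2 * u20 * ρ20 + u10 * ρ20)) * h
          - (ρ10 + ρ20) * h1
      nlinarith [sq_nonneg (x * (ρ10 + ρ20) + k * (-(u10 * ρ10) - 2 * u20 * ρ20 + u10 * ρ20)),
        sq_nonneg (y * (ρ10 + ρ20)), mul_pos hP hpos]
end
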